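/- arXiv:2407.01448 — 5 statements merged into one kernel-verified Lean document; each statement's English description precedes it below -/
import Mathlib

section
/- Let σ ∈ S_n with ℓ(σ) = k, and set Inv(σ) = {(i,j) : 1 ≤ i < j ≤ n, σ⁻¹(i) > σ⁻¹(j)} (so |Inv(σ)| = k). For a function t : Inv(σ) → {0, 1, …, p-1} let u(t) = ∏_{(i,j) ∈ Inv(σ)} (I + t_{ij}·E_{ij}), the product taken in a fixed order. Then the double coset J·w_σ·J is the union over all such t of the left cosets u(t)·w_σ·J, and these p^k left cosets of J are pairwise distinct. -/
open Matrix MeasureTheory Pointwise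

variable (p n : ℕ) [Fact p.Prime]

/-- The `(i,j)` entry of an element of `GL n ℚ_[p]`. -/
def entry (g : GL (Fin n) ℚ_[p]) (i j : Fin n) : ℚ_[p] :=
  (g : Matrix (Fin n) (Fin n) ℚ_[p]) i j

/-- The Iwahori subgroup `J`, as a subset of `GL n ℚ_[p]`: matrices of `GL_n(ℤ_p)`
(integral matrix with integral inverse) whose entries strictly below the diagonal
lie in `pℤ_p` (i.e. have norm `< 1`). -/
def Jset : Set (GL (Fin n) ℚ_[p]) :=
  {g | (∀ i j, ‖entry p n g i j‖ ≤ 1) ∧ (∀ i j, ‖entry p n g⁻¹ i j‖ ≤ 1) ∧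
       ∀ i j : Fin n, j < i → ‖entry p n g i j‖ < 1}

/-- The diagonal torus `T`. -/
def Tset : Set (GL (Fin n) ℚ_[p]) :=
  {g | ∀ i j : Fin n, i ≠ j → entry p n g i j = 0}

/-- The group `N` of upper unitriangular matrices. -/
def Nset : Set (GL (Fin n) ℚ_[p]) :=
  {g | (∀ i : Fin n, entry p n g i i = 1) ∧ ∀ i j : Fin n, j < i → entry p n g i j = 0}

/-- The upper triangular Borel subgroup `B`. -/
def Bset : Set (GL (Fin n) ℚ_[p]) :=
  {g | ∀ i j : Fin n, j < i → entry p n g i j = 0}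

/-- Permutation matrix `w_σ` of `σ` as an element of `GL n ℚ_[p]`, in the convention
`w_σ · e_j = e_{σ(j)}` (entries `(w_σ)_{ij} = δ_{i, σ(j)}`). -/
noncomputable def permGL (σ : Equiv.Perm (Fin n)) : GL (Fin n) ℚ_[p] :=
  Matrix.GeneralLinearGroup.mkOfDetNeZero ((σ.permMatrix ℚ_[p])ᵀ) (by
    rw [Matrix.det_transpose, Matrix.det_permutation]
    exact_mod_cast Int.cast_ne_zero.mpr (Equiv.Perm.sign σ).ne_zero)

/-- The elementary matrix `I + t·E_{ij}` as an element of `GL n ℚ_[p]`. -/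
noncomputable def elemGL (i j : Fin n) (hij : i ≠ j) (t : ℚ_[p]) : GL (Fin n) ℚ_[p] :=
  Matrix.GeneralLinearGroup.mkOfDetNeZero (Matrix.transvection i j t) (by
    rw [Matrix.det_transvection_of_ne i j hij]
    exact one_ne_zero)

/-- The set of inversions `Inv(σ) = {(i,j) : i < j, σ⁻¹ i > σ⁻¹ j}`. -/
def InvSet (σ : Equiv.Perm (Fin n)) : Finset (Fin n × Fin n) :=
  Finset.univ.filter fun ij => ij.1 < ij.2 ∧ σ⁻¹ ij.2 < σ⁻¹ ij.1

/-- The length `ℓ(σ)` (number of inversions) of `σ`. -/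
def len (σ : Equiv.Perm (Fin n)) : ℕ := (InvSet n σ).card

/-- `i+1` as an element of `Fin n`. -/
def finSucc (i : Fin n) (h : (i : ℕ) + 1 < n) : Fin n := ⟨(i : ℕ) + 1, h⟩

theorem finSucc_ne (i : Fin n) (h : (i : ℕ) + 1 < n) : i ≠ finSucc n i h := by
  simp [finSucc, Fin.ext_iff]

/-- The value of `χδ_B` at `b`, defined through the diagonal entries of `b`:
`(χδ_B)(b) = ∏_{i=1}^n z_i^{v(b_i)} p^{-(n+1-2i) v(b_i)}`. -/
noncomputable def chiDelta (z : Fin n → ℂˣ) (d : GL (Fin n) ℚ_[p]) : ℂ :=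
  ∏ i : Fin n, ((z i : ℂ) ^ (entry p n d i i).valuation *
    (p : ℂ) ^ (-(((n : ℤ) + 1) - 2 * ((i : ℕ) + 1 : ℤ)) * (entry p n d i i).valuation))

/-- The character `ψ(u) = ∏_{i=1}^{n-1} ψ₀(u_{i,i+1})` of `N`, built from an additive
character `ψ₀` of `ℚ_p`. -/
noncomputable def psiN (ψ₀ : ℚ_[p] → ℂ) (u : GL (Fin n) ℚ_[p]) : ℂ :=
  ∏ i : Fin n, if h : (i : ℕ) + 1 < n then ψ₀ (entry p n u i (finSucc n i h)) else 1

/-- `λ(d)` is `σ`-dominant: for all adjacent indices,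
`v(d_i) - v(d_{i+1}) ≥ 0` if `σ⁻¹ i < σ⁻¹(i+1)`, and `≥ -1` if `σ⁻¹ i > σ⁻¹(i+1)`. -/
def IsDom (σ : Equiv.Perm (Fin n)) (d : GL (Fin n) ℚ_[p]) : Prop :=
  ∀ (i : Fin n) (h : (i : ℕ) + 1 < n),
    (σ⁻¹ i < σ⁻¹ (finSucc n i h) →
      0 ≤ (entry p n d i i).valuation
            - (entry p n d (finSucc n i h) (finSucc n i h)).valuation) ∧
    (σ⁻¹ (finSucc n i h) < σ⁻¹ i →
      -1 ≤ (entry p n d i i).valuation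
            - (entry p n d (finSucc n i h) (finSucc n i h)).valuation)

/-- The dominant part `T⁺` of the diagonal torus: `v(d_1) ≥ … ≥ v(d_n)`. -/
def Tplus : Set (GL (Fin n) ℚ_[p]) :=
  {d | d ∈ Tset p n ∧ Antitone fun i : Fin n => (entry p n d i i).valuation}

/-- The double coset `J g J`. -/
def dcos (g : GL (Fin n) ℚ_[p]) : Set (GL (Fin n) ℚ_[p]) :=
  {x | ∃ a ∈ Jset p n, ∃ b ∈ Jset p n, x = a * g * b}
/-- The ordered product `u(t) = ∏_{(i,j) ∈ Inv(σ)} (I + t_{ij}·E_{ij})`, the product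
taken in a fixed (row-major) order. -/
noncomputable def uMat (σ : Equiv.Perm (Fin n))
    (t : {ij : Fin n × Fin n // ij ∈ InvSet n σ} → Fin p) : GL (Fin n) ℚ_[p] :=
  (((List.finRange n) ×ˢ (List.finRange n)).map fun ij =>
    if h : ij ∈ InvSet n σ then
      elemGL p n ij.1 ij.2 (ne_of_lt (Finset.mem_filter.mp h).2.1)
        (((t ⟨ij, h⟩ : ℕ) : ℚ_[p]))
    else 1).prod

/-! Every `a ∈ J` factors as `a = u(t) c` with `c ∈ J` and `c_{ij} ∈ pℤ_p` for `(i, j) ∈ Inv(σ)`: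
the entries at the inversions are cleared one at a time, in lexicographic order, by left
multiplication with `I - s E_{ij}`, which is possible because the diagonal entries of elements of
`J` are units. Such a `c` satisfies `w_σ⁻¹ c w_σ ∈ J`, so `J w_σ J` is the union of the cosets
`u(t) w_σ J`. Conversely, if `u(t) w_σ J = u(t') w_σ J` then `w_σ⁻¹ u(t')⁻¹ u(t) w_σ ∈ J`, so the
entries of `u(t')⁻¹ u(t)` at the inversions lie in `pℤ_p`; at the first inversion where `t` and
`t'` differ this entry is `t_{ij} - t'_{ij}`, which is not in `pℤ_p` for distinct
`0 ≤ t_{ij}, t'_{ij} < p`. -/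

open IsLocalRing

theorem List.pairwise_toLex_lt_product {α β : Type*} [LT α] [LT β] {l₁ : List α} {l₂ : List β}
    (h₁ : l₁.Pairwise (· < ·)) (h₂ : l₂.Pairwise (· < ·)) :
    (l₁ ×ˢ l₂).Pairwise (fun x y => toLex x < toLex y) := by
  simp only [SProd.sprod, List.product, List.pairwise_flatMap, List.pairwise_map, List.mem_map,
    Prod.Lex.toLex_lt_toLex]
  refine ⟨fun a _ => h₂.imp fun h => Or.inr ⟨trivial, h⟩, h₁.imp fun h => ?_⟩
  rintro _ ⟨_, _, rfl⟩ _ ⟨_, _, rfl⟩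
  exact Or.inl h

theorem IsUltrametricDist.norm_sum_lt_of_forall_lt {E ι : Type*} [SeminormedAddCommGroup E]
    [IsUltrametricDist E] {s : Finset ι} {f : ι → E} {C : ℝ} (hC : 0 < C)
    (h : ∀ i ∈ s, ‖f i‖ < C) : ‖∑ i ∈ s, f i‖ < C := by
  rcases s.eq_empty_or_nonempty with rfl | hs
  · simpa using hC
  · obtain ⟨i, hi, hle⟩ := exists_norm_finsetSum_le_of_nonempty hs f
    exact hle.trans_lt (h i hi)

theorem pairwise_toLex_lt_finRange_product (n : ℕ) :
    (List.finRange n ×ˢ List.finRange n).Pairwise fun x y => toLex x < toLex y :=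
  List.pairwise_toLex_lt_product (List.pairwise_lt_finRange n) (List.pairwise_lt_finRange n)

theorem mem_finRange_product {n : ℕ} (r : Fin n × Fin n) :
    r ∈ List.finRange n ×ˢ List.finRange n :=
  List.mem_product.mpr ⟨List.mem_finRange _, List.mem_finRange _⟩

namespace Matrix

variable {m R : Type*} [Fintype m] [DecidableEq m] [LinearOrder m] [CommRing R]

theorem det_sub_prod_diag_mem (I : Ideal R) {M : Matrix m m R}
    (hM : ∀ i j, j < i → M i j ∈ I) : M.det - ∏ i, M i i ∈ I := by
  have hup : (M.map (Ideal.Quotient.mk I)).IsUpperTriangular := fun i j hij =>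
    Ideal.Quotient.eq_zero_iff_mem.mpr (hM i j hij)
  rw [← Ideal.Quotient.eq, RingHom.map_det, RingHom.mapMatrix_apply, det_of_isUpperTriangular hup,
    map_prod]
  rfl

theorem isUnit_diag_of_isUnit_det [IsLocalRing R] {M : Matrix m m R} (hdet : IsUnit M.det)
    (hM : ∀ i j, j < i → M i j ∈ maximalIdeal R) (i : m) : IsUnit (M i i) := by
  have hprod : IsUnit (∏ k, M k k) := by
    by_contra h
    refine (mem_maximalIdeal _).mp ?_ hdet
    simpa using add_mem (det_sub_prod_diag_mem _ hM) ((mem_maximalIdeal _).mpr h)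
  rw [← Finset.mul_prod_erase _ _ (Finset.mem_univ i)] at hprod
  exact isUnit_of_mul_isUnit_left hprod

/-- Contains every transvection at a position lexicographically after `(i, j)`, and the
`(i, j)` entry of `X * transvection i j c * Y` is `c` for `X`, `Y` in it. -/
def unitriangularRowTail (i j : m) : Submonoid (Matrix m m R) where
  carrier := {M | M.IsUpperTriangular ∧ (∀ a, M a a = 1) ∧ ∀ b, b ≠ i → b ≤ j → M i b = 0}
  one_mem' := ⟨blockTriangular_one, one_apply_eq, fun _ hb _ => one_apply_ne hb.symm⟩
  mul_mem' := by
    rintro M N ⟨hM, hM₁, hMi⟩ ⟨hN, hN₁, hNi⟩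
    refine ⟨hM.mul hN, fun a => ?_, fun b hb hbj => ?_⟩
    · rw [mul_apply, Finset.sum_eq_single a, hM₁, hN₁, one_mul]
      · intro r _ hra
        rcases hra.lt_or_gt with h | h
        · rw [hM h, zero_mul]
        · rw [hN h, mul_zero]
      · simp
    · rw [mul_apply]
      refine Finset.sum_eq_zero fun r _ => ?_
      by_cases hri : r = i
      · rw [hri, hNi b hb hbj, mul_zero]
      rcases le_or_gt r j with hrj | hrj
      · rw [hMi r hri hrj, zero_mul]
      · rw [hN (hbj.trans_lt hrj), mul_zero]

theorem transvection_mem_unitriangularRowTail {i j i' j' : m} (hij' : i' < j')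
    (hlt : toLex (i, j) < toLex (i', j')) (c : R) :
    transvection i' j' c ∈ unitriangularRowTail i j := by
  refine ⟨fun a b hba => ?_, fun a => ?_, fun b hb hbj => ?_⟩
  · replace hba : b < a := hba
    simp only [transvection, add_apply, one_apply_ne hba.ne', single_apply, zero_add]
    exact if_neg fun ⟨hi, hj⟩ => hij'.not_gt (hi ▸ hj ▸ hba)
  · simp only [transvection, add_apply, one_apply_eq, single_apply, add_eq_left]
    exact if_neg fun h => hij'.ne (h.1.trans h.2.symm)
  · simp only [transvection, add_apply, one_apply_ne hb.symm, single_apply, zero_add]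
    refine if_neg fun h => ?_
    rw [h.1, h.2, Prod.Lex.toLex_lt_toLex] at hlt
    exact hlt.elim (lt_irrefl i) fun h' => hbj.not_gt h'.2

theorem mul_transvection_mul_apply {i j : m} (hij : i ≠ j) {X Y : Matrix m m R}
    (hX : X ∈ unitriangularRowTail i j) (hY : Y ∈ unitriangularRowTail i j) (c : R) :
    (X * transvection i j c * Y) i j = c := by
  have hXY : (X * Y) i j = 0 := by
    rw [mul_apply]
    refine Finset.sum_eq_zero fun r _ => ?_
    by_cases hri : r = i
    · rw [hri, hY.2.2 j hij.symm le_rfl, mul_zero]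
    rcases le_or_gt r j with hrj | hrj
    · rw [hX.2.2 r hri hrj, zero_mul]
    · rw [hY.1 hrj, mul_zero]
  have hXsY : (X * single i j c * Y) i j = c := by
    rw [mul_apply, Finset.sum_eq_single j, mul_single_apply_same, hX.2.1, hY.2.1, one_mul, mul_one]
    · intro r _ hrj
      rw [mul_single_apply_of_ne _ _ _ _ _ hrj, zero_mul]
    · simp
  rw [transvection, mul_add, mul_one, add_mul, add_apply, hXY, hXsY, zero_add]

end Matrix

namespace Padic

variable {p}

theorem exists_fin_norm_sub_lt_one {x : ℚ_[p]} (hx : ‖x‖ ≤ 1) :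
    ∃ s : Fin p, ‖x - (s : ℕ)‖ < 1 := by
  let z : ℤ_[p] := ⟨x, hx⟩
  refine ⟨⟨z.zmodRepr, z.zmodRepr_lt_p⟩, ?_⟩
  simpa [PadicInt.norm_def] using PadicInt.mem_nonunits.mp z.sub_zmodRepr_mem

theorem exists_fin_norm_sub_mul_lt_one {x y : ℚ_[p]} (hx : ‖x‖ ≤ 1) (hy : ‖y‖ = 1) :
    ∃ s : Fin p, ‖x - (s : ℕ) * y‖ < 1 := by
  have hy0 : y ≠ 0 := norm_ne_zero_iff.mp (by rw [hy]; exact one_ne_zero)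
  obtain ⟨s, hs⟩ := exists_fin_norm_sub_lt_one (x := x / y) (by rwa [norm_div, hy, div_one])
  refine ⟨s, ?_⟩
  rwa [← mul_one ‖_‖, ← hy, ← norm_mul, sub_mul, div_mul_cancel₀ x hy0, hy] at hs

theorem fin_eq_of_norm_sub_lt_one {s s' : Fin p} (h : ‖((s : ℕ) : ℚ_[p]) - (s' : ℕ)‖ < 1) :
    s = s' := by
  have hdvd : (p : ℤ) ∣ (s : ℤ) - s' := by
    rw [← norm_intCast_lt_one_iff]
    simpa using h
  have := Int.eq_zero_of_abs_lt_dvd hdvd (abs_lt.mpr ⟨by omega, by omega⟩)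
  exact Fin.ext (by omega)

end Padic

section Iwahori

variable {p n}

theorem entry_mul (a b : GL (Fin n) ℚ_[p]) (i j : Fin n) :
    entry p n (a * b) i j = ∑ k, entry p n a i k * entry p n b k j := rfl

variable (p n) in
def iwahori : Submonoid (GL (Fin n) ℚ_[p]) where
  carrier := Jset p n
  one_mem' := by
    refine ⟨fun i j => ?_, fun i j => ?_, fun i j hji => ?_⟩
    · by_cases h : i = j <;> simp [entry, one_apply, h]
    · by_cases h : i = j <;> simp [entry, one_apply, h]
    · simp [entry, one_apply, hji.ne']
  mul_mem' := by
    rintro a b ⟨ha₁, ha₂, ha₃⟩ ⟨hb₁, hb₂, hb₃⟩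
    refine ⟨fun i j => ?_, fun i j => ?_, fun i j hji => ?_⟩
    · rw [entry_mul]
      refine IsUltrametricDist.norm_sum_le_of_forall_le_of_nonneg zero_le_one fun k _ => ?_
      rw [norm_mul]
      exact mul_le_one₀ (ha₁ i k) (norm_nonneg _) (hb₁ k j)
    · rw [_root_.mul_inv_rev, entry_mul]
      refine IsUltrametricDist.norm_sum_le_of_forall_le_of_nonneg zero_le_one fun k _ => ?_
      rw [norm_mul]
      exact mul_le_one₀ (hb₂ i k) (norm_nonneg _) (ha₂ k j)
    · rw [entry_mul]
      refine IsUltrametricDist.norm_sum_lt_of_forall_lt one_pos fun k _ => ?_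
      rw [norm_mul]
      rcases le_or_gt k j with hkj | hjk
      · exact (mul_le_of_le_one_right (norm_nonneg _) (hb₁ k j)).trans_lt
          (ha₃ i k (hkj.trans_lt hji))
      · exact (mul_le_of_le_one_left (norm_nonneg _) (ha₁ i k)).trans_lt (hb₃ k j hjk)

def integralMatrix (g : GL (Fin n) ℚ_[p]) (hg : ∀ i j, ‖entry p n g i j‖ ≤ 1) :
    Matrix (Fin n) (Fin n) ℤ_[p] :=
  Matrix.of fun i j => ⟨entry p n g i j, hg i j⟩

theorem coe_det_integralMatrix (g : GL (Fin n) ℚ_[p]) (hg : ∀ i j, ‖entry p n g i j‖ ≤ 1) :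
    ((integralMatrix g hg).det : ℚ_[p]) = (g : Matrix (Fin n) (Fin n) ℚ_[p]).det :=
  RingHom.map_det PadicInt.Coe.ringHom _

/-- Modulo `p`, `b` is an invertible upper triangular matrix. -/
theorem norm_entry_self_of_mem_Jset {b : GL (Fin n) ℚ_[p]} (hb : b ∈ Jset p n) (i : Fin n) :
    ‖entry p n b i i‖ = 1 := by
  have hdet : IsUnit (integralMatrix b hb.1).det := by
    refine IsUnit.of_mul_eq_one (integralMatrix b⁻¹ hb.2.1).det (Subtype.ext ?_)
    rw [PadicInt.coe_mul, coe_det_integralMatrix, coe_det_integralMatrix, ← det_mul,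
      ← Units.val_mul, mul_inv_cancel, Units.val_one, det_one, PadicInt.coe_one]
  have hlower : ∀ i j, j < i → integralMatrix b hb.1 i j ∈ maximalIdeal ℤ_[p] :=
    fun i j hji => PadicInt.mem_nonunits.mpr (hb.2.2 i j hji)
  exact PadicInt.isUnit_iff.mp (isUnit_diag_of_isUnit_det hdet hlower i)

theorem coe_elemGL (i j : Fin n) (h : i ≠ j) (c : ℚ_[p]) :
    (elemGL p n i j h c : Matrix (Fin n) (Fin n) ℚ_[p]) = transvection i j c := rfl

theorem elemGL_mul_elemGL (i j : Fin n) (h : i ≠ j) (c d : ℚ_[p]) :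
    elemGL p n i j h c * elemGL p n i j h d = elemGL p n i j h (c + d) :=
  Units.ext (transvection_mul_transvection_same i j h c d)

theorem elemGL_inv (i j : Fin n) (h : i ≠ j) (c : ℚ_[p]) :
    (elemGL p n i j h c)⁻¹ = elemGL p n i j h (-c) := by
  refine inv_eq_of_mul_eq_one_right ?_
  rw [elemGL_mul_elemGL, add_neg_cancel]
  exact Units.ext (transvection_zero i j)

theorem entry_elemGL_mul (i j : Fin n) (h : i ≠ j) (c : ℚ_[p]) (b : GL (Fin n) ℚ_[p])
    (a e : Fin n) :
    entry p n (elemGL p n i j h c * b) a e =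
      if a = i then entry p n b a e + c * entry p n b j e else entry p n b a e := by
  split_ifs with ha
  · subst ha; exact transvection_mul_apply_same a j e c _
  · exact transvection_mul_apply_of_ne i j a e ha c _

theorem elemGL_mem_Jset {i j : Fin n} (hij : i < j) {c : ℚ_[p]} (hc : ‖c‖ ≤ 1) :
    elemGL p n i j hij.ne c ∈ Jset p n := by
  have hentry : ∀ (c : ℚ_[p]) a b, entry p n (elemGL p n i j hij.ne c) a b =
      (if a = b then 1 else 0) + (if a = i ∧ b = j then c else 0) := by
    intro c a b
    simp [entry, coe_elemGL, transvection, one_apply, single_apply, eq_comm]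
  refine ⟨fun a b => ?_, fun a b => ?_, fun a b hba => ?_⟩
  · rw [hentry]
    split_ifs with h₁ h₂ h₂ <;> simp_all [hij.ne]
  · rw [elemGL_inv, hentry]
    split_ifs with h₁ h₂ h₂ <;> simp_all [hij.ne]
  · rw [hentry, if_neg hba.ne', if_neg (by rintro ⟨rfl, rfl⟩; exact hij.not_gt hba)]
    simp

theorem coe_permGL (σ : Equiv.Perm (Fin n)) :
    (permGL p n σ : Matrix (Fin n) (Fin n) ℚ_[p]) = σ⁻¹.permMatrix ℚ_[p] :=
  transpose_permMatrix σ

theorem permGL_inv (σ : Equiv.Perm (Fin n)) : (permGL p n σ)⁻¹ = permGL p n σ⁻¹ := by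
  refine inv_eq_of_mul_eq_one_right (Units.ext ?_)
  simp [coe_permGL, ← permMatrix_mul]

theorem entry_permGL_conj (σ : Equiv.Perm (Fin n)) (g : GL (Fin n) ℚ_[p]) (a b : Fin n) :
    entry p n ((permGL p n σ)⁻¹ * g * permGL p n σ) a b = entry p n g (σ a) (σ b) := by
  simp [entry, permGL_inv, coe_permGL, PEquiv.toMatrix_toPEquiv_mul,
    PEquiv.mul_toMatrix_toPEquiv, Equiv.Perm.inv_def]

def SmallOnInvSet (σ : Equiv.Perm (Fin n)) (c : GL (Fin n) ℚ_[p]) : Prop :=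
  ∀ r ∈ InvSet n σ, ‖entry p n c r.1 r.2‖ < 1

theorem permGL_conj_mem_Jset {σ : Equiv.Perm (Fin n)} {c : GL (Fin n) ℚ_[p]}
    (hc : c ∈ Jset p n) (hsmall : SmallOnInvSet σ c) :
    (permGL p n σ)⁻¹ * c * permGL p n σ ∈ Jset p n := by
  have hinv : ((permGL p n σ)⁻¹ * c * permGL p n σ)⁻¹ = (permGL p n σ)⁻¹ * c⁻¹ * permGL p n σ := by
    group
  refine ⟨fun i j => ?_, fun i j => ?_, fun i j hji => ?_⟩
  · rw [entry_permGL_conj]; exact hc.1 _ _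
  · rw [hinv, entry_permGL_conj]; exact hc.2.1 _ _
  · rw [entry_permGL_conj]
    rcases lt_trichotomy (σ i) (σ j) with h | h | h
    · exact hsmall (σ i, σ j) (by simpa [InvSet] using ⟨h, hji⟩)
    · exact absurd (σ.injective h) hji.ne'
    · exact hc.2.2 _ _ h

theorem smallOnInvSet_of_permGL_conj_mem_Jset {σ : Equiv.Perm (Fin n)} {c : GL (Fin n) ℚ_[p]}
    (h : (permGL p n σ)⁻¹ * c * permGL p n σ ∈ Jset p n) : SmallOnInvSet σ c := by
  intro r hr
  obtain ⟨-, -, hinv⟩ := Finset.mem_filter.mp hr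
  simpa [entry_permGL_conj] using h.2.2 _ _ hinv

variable (σ : Equiv.Perm (Fin n))

noncomputable def uFactor (t : {ij : Fin n × Fin n // ij ∈ InvSet n σ} → Fin p)
    (ij : Fin n × Fin n) : GL (Fin n) ℚ_[p] :=
  if h : ij ∈ InvSet n σ then
    elemGL p n ij.1 ij.2 (ne_of_lt (Finset.mem_filter.mp h).2.1) (((t ⟨ij, h⟩ : ℕ) : ℚ_[p]))
  else 1

noncomputable def uProd (t : {ij : Fin n × Fin n // ij ∈ InvSet n σ} → Fin p)
    (l : List (Fin n × Fin n)) : GL (Fin n) ℚ_[p] :=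
  (l.map (uFactor σ t)).prod

theorem uMat_eq_uProd (t : {ij : Fin n × Fin n // ij ∈ InvSet n σ} → Fin p) :
    uMat p n σ t = uProd σ t (List.finRange n ×ˢ List.finRange n) := rfl

theorem uFactor_mem_Jset (t : {ij : Fin n × Fin n // ij ∈ InvSet n σ} → Fin p)
    (ij : Fin n × Fin n) : uFactor σ t ij ∈ Jset p n := by
  unfold uFactor
  split_ifs with h
  · exact elemGL_mem_Jset (Finset.mem_filter.mp h).2.1
      (IsUltrametricDist.norm_natCast_le_one ℚ_[p] _)
  · exact (iwahori p n).one_mem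

theorem uProd_mem_Jset (t : {ij : Fin n × Fin n // ij ∈ InvSet n σ} → Fin p)
    (l : List (Fin n × Fin n)) : uProd σ t l ∈ Jset p n :=
  (iwahori p n).list_prod_mem fun _ hg => by
    obtain ⟨ij, -, rfl⟩ := List.mem_map.mp hg
    exact uFactor_mem_Jset σ t ij

theorem uMat_mem_Jset (t : {ij : Fin n × Fin n // ij ∈ InvSet n σ} → Fin p) :
    uMat p n σ t ∈ Jset p n :=
  uProd_mem_Jset σ t _

theorem uProd_congr {t t' : {ij : Fin n × Fin n // ij ∈ InvSet n σ} → Fin p}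
    {l : List (Fin n × Fin n)} (h : ∀ r (hr : r ∈ InvSet n σ), r ∈ l → t ⟨r, hr⟩ = t' ⟨r, hr⟩) :
    uProd σ t l = uProd σ t' l := by
  refine congrArg List.prod (List.map_congr_left fun r hrl => ?_)
  unfold uFactor
  split_ifs with hr
  · rw [h r hr hrl]
  · rfl

theorem uFactor_of_mem (t : {ij : Fin n × Fin n // ij ∈ InvSet n σ} → Fin p)
    {ij : Fin n × Fin n} (h : ij ∈ InvSet n σ) :
    uFactor σ t ij =
      elemGL p n ij.1 ij.2 (ne_of_lt (Finset.mem_filter.mp h).2.1) (((t ⟨ij, h⟩ : ℕ) : ℚ_[p])) :=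
  dif_pos h

theorem uFactor_of_not_mem (t : {ij : Fin n × Fin n // ij ∈ InvSet n σ} → Fin p)
    {ij : Fin n × Fin n} (h : ij ∉ InvSet n σ) : uFactor σ t ij = 1 :=
  dif_neg h

theorem uProd_cons (t : {ij : Fin n × Fin n // ij ∈ InvSet n σ} → Fin p)
    (q : Fin n × Fin n) (l : List (Fin n × Fin n)) :
    uProd σ t (q :: l) = uFactor σ t q * uProd σ t l :=
  List.prod_cons

theorem uProd_concat (t : {ij : Fin n × Fin n // ij ∈ InvSet n σ} → Fin p)
    (l : List (Fin n × Fin n)) (q : Fin n × Fin n) :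
    uProd σ t (l ++ [q]) = uProd σ t l * uFactor σ t q := by
  simp [uProd]

/-- Subtracting `s` times row `j` from row `i` makes the `(i, j)` entry divisible by `p` (as
`b j j` is a unit), and changes the entries `(i, r)` with `r < j` only by multiples of
`b j r ∈ pℤ_p`. -/
theorem exists_elemGL_inv_mul_small {b : GL (Fin n) ℚ_[p]} (hb : b ∈ Jset p n) {i j : Fin n}
    (hij : i < j) :
    ∃ s : Fin p, (elemGL p n i j hij.ne (s : ℕ))⁻¹ * b ∈ Jset p n ∧
      ‖entry p n ((elemGL p n i j hij.ne (s : ℕ))⁻¹ * b) i j‖ < 1 ∧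
      ∀ r : Fin n × Fin n, toLex r < toLex (i, j) → ‖entry p n b r.1 r.2‖ < 1 →
        ‖entry p n ((elemGL p n i j hij.ne (s : ℕ))⁻¹ * b) r.1 r.2‖ < 1 := by
  obtain ⟨s, hs⟩ :=
    Padic.exists_fin_norm_sub_mul_lt_one (hb.1 i j) (norm_entry_self_of_mem_Jset hb j)
  have hentry : ∀ a e, entry p n ((elemGL p n i j hij.ne (s : ℕ))⁻¹ * b) a e =
      if a = i then entry p n b a e - (s : ℕ) * entry p n b j e else entry p n b a e := by
    intro a e
    rw [elemGL_inv, entry_elemGL_mul, neg_mul, ← sub_eq_add_neg]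
  refine ⟨s, (iwahori p n).mul_mem ?_ hb, by simpa [hentry] using hs, fun r hr hbr => ?_⟩
  · rw [elemGL_inv]
    exact elemGL_mem_Jset hij (by simpa using IsUltrametricDist.norm_natCast_le_one ℚ_[p] s)
  rw [hentry]
  split_ifs with hri
  · have hrj : r.2 < j := by
      rw [Prod.Lex.toLex_lt_toLex] at hr
      exact hr.elim (fun h => absurd hri h.ne) And.right
    have hsmall : ‖((s : ℕ) : ℚ_[p]) * entry p n b j r.2‖ < 1 := by
      rw [norm_mul]
      exact (mul_le_of_le_one_left (norm_nonneg _)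
        (IsUltrametricDist.norm_natCast_le_one ℚ_[p] s)).trans_lt (hb.2.2 j r.2 hrj)
    rw [sub_eq_add_neg]
    exact (IsUltrametricDist.norm_add_le_max _ _).trans_lt
      (max_lt (hri ▸ hbr) (by rwa [norm_neg]))
  · exact hbr

theorem uProd_update_concat (t : {ij : Fin n × Fin n // ij ∈ InvSet n σ} → Fin p)
    {l : List (Fin n × Fin n)} {q : Fin n × Fin n} (hql : q ∉ l) (hq : q ∈ InvSet n σ)
    (s : Fin p) :
    uProd σ (Function.update t ⟨q, hq⟩ s) (l ++ [q]) =
      uProd σ t l * elemGL p n q.1 q.2 (ne_of_lt (Finset.mem_filter.mp hq).2.1) (s : ℕ) := by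
  rw [uProd_concat, uFactor_of_mem σ _ hq, Function.update_self]
  congr 1
  refine uProd_congr σ fun r hr hrl => Function.update_of_ne ?_ _ _
  rintro ⟨⟩
  exact hql hrl

theorem exists_uProd_inv_mul_small {l : List (Fin n × Fin n)}
    (hl : l.Pairwise fun x y => toLex x < toLex y) {b : GL (Fin n) ℚ_[p]} (hb : b ∈ Jset p n) :
    ∃ t, (uProd σ t l)⁻¹ * b ∈ Jset p n ∧
      ∀ r ∈ InvSet n σ, r ∈ l → ‖entry p n ((uProd σ t l)⁻¹ * b) r.1 r.2‖ < 1 := by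
  induction l using List.reverseRecOn with
  | nil => exact ⟨fun _ => ⟨0, (Fact.out : p.Prime).pos⟩, by simpa [uProd] using hb, by simp⟩
  | append_singleton l q ih =>
    obtain ⟨hl, -, hlq⟩ := List.pairwise_append.mp hl
    have hlq : ∀ r ∈ l, toLex r < toLex q := fun r hr => hlq r hr q (List.mem_singleton_self q)
    obtain ⟨t₀, hJ, hsmall⟩ := ih hl
    by_cases hq : q ∈ InvSet n σ
    · obtain ⟨s, hsJ, hsq, hspres⟩ :=
        exists_elemGL_inv_mul_small hJ (Finset.mem_filter.mp hq).2.1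
      have hql : q ∉ l := fun h => lt_irrefl _ (hlq q h)
      refine ⟨Function.update t₀ ⟨q, hq⟩ s, ?_, fun r hr hrl => ?_⟩ <;>
        rw [uProd_update_concat σ t₀ hql hq, _root_.mul_inv_rev, mul_assoc]
      · exact hsJ
      · rcases List.mem_append.mp hrl with hrl | hrq
        · exact hspres r (hlq r hrl) (hsmall r hr hrl)
        · rwa [List.mem_singleton.mp hrq]
    · refine ⟨t₀, ?_, fun r hr hrl => ?_⟩ <;>
        rw [uProd_concat, uFactor_of_not_mem σ t₀ hq, mul_one]
      · exact hJ
      · rcases List.mem_append.mp hrl with hrl | hrq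
        · exact hsmall r hr hrl
        · exact absurd (List.mem_singleton.mp hrq ▸ hr) hq

theorem exists_uMat_mul_eq {a : GL (Fin n) ℚ_[p]} (ha : a ∈ Jset p n) :
    ∃ t c, c ∈ Jset p n ∧ SmallOnInvSet σ c ∧ a = uMat p n σ t * c := by
  obtain ⟨t, hJ, hsmall⟩ := exists_uProd_inv_mul_small σ (pairwise_toLex_lt_finRange_product n) ha
  refine ⟨t, _, hJ, fun r hr => hsmall r hr (mem_finRange_product r), ?_⟩
  rw [uMat_eq_uProd, mul_inv_cancel_left]

theorem uProd_mem_units_unitriangularRowTail (t : {ij : Fin n × Fin n // ij ∈ InvSet n σ} → Fin p)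
    {q : Fin n × Fin n} {l : List (Fin n × Fin n)} (hl : ∀ r ∈ l, toLex q < toLex r) :
    uProd σ t l ∈
      (unitriangularRowTail q.1 q.2 : Submonoid (Matrix (Fin n) (Fin n) ℚ_[p])).units := by
  refine Subgroup.list_prod_mem _ fun g hg => ?_
  obtain ⟨r, hrl, rfl⟩ := List.mem_map.mp hg
  by_cases hr : r ∈ InvSet n σ
  · have hlt := (Finset.mem_filter.mp hr).2.1
    rw [uFactor_of_mem σ t hr]
    refine Submonoid.mem_units_of_val_mem_inv_val_mem _
      (transvection_mem_unitriangularRowTail hlt (hl r hrl) _) ?_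
    rw [elemGL_inv]
    exact transvection_mem_unitriangularRowTail hlt (hl r hrl) _
  · rw [uFactor_of_not_mem σ t hr]
    exact one_mem _

/-- For the head `q` of `l`, the `q` entry of `u(t')⁻¹ u(t)` is `t q - t' q`, because all other
factors lie in `unitriangularRowTail q.1 q.2`. -/
theorem apply_eq_of_smallOnInvSet_uProd {l : List (Fin n × Fin n)}
    (hl : l.Pairwise fun x y => toLex x < toLex y)
    {t t' : {ij : Fin n × Fin n // ij ∈ InvSet n σ} → Fin p}
    (h : SmallOnInvSet σ ((uProd σ t' l)⁻¹ * uProd σ t l)) :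
    ∀ r (hr : r ∈ InvSet n σ), r ∈ l → t ⟨r, hr⟩ = t' ⟨r, hr⟩ := by
  induction l with
  | nil => simp
  | cons q l ih =>
    obtain ⟨hql, hl⟩ := List.pairwise_cons.mp hl
    have htq : ∀ hq : q ∈ InvSet n σ, t ⟨q, hq⟩ = t' ⟨q, hq⟩ := by
      intro hq
      have hlt := (Finset.mem_filter.mp hq).2.1
      have hdiff : (uProd σ t' (q :: l))⁻¹ * uProd σ t (q :: l) =
          (uProd σ t' l)⁻¹ * elemGL p n q.1 q.2 hlt.ne ((t ⟨q, hq⟩ : ℕ) - (t' ⟨q, hq⟩ : ℕ)) *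
            uProd σ t l := by
        rw [uProd_cons, uProd_cons, uFactor_of_mem σ t hq, uFactor_of_mem σ t' hq,
          _root_.mul_inv_rev, elemGL_inv, sub_eq_neg_add, ← elemGL_mul_elemGL]
        group
      have hentry : entry p n ((uProd σ t' (q :: l))⁻¹ * uProd σ t (q :: l)) q.1 q.2 =
          (t ⟨q, hq⟩ : ℕ) - (t' ⟨q, hq⟩ : ℕ) := by
        rw [hdiff, entry, Units.val_mul, Units.val_mul, coe_elemGL]
        exact mul_transvection_mul_apply hlt.ne
          (uProd_mem_units_unitriangularRowTail σ t' hql).2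
          (uProd_mem_units_unitriangularRowTail σ t hql).1 _
      exact Padic.fin_eq_of_norm_sub_lt_one (hentry ▸ h q hq)
    have hfactor : uFactor σ t q = uFactor σ t' q := by
      unfold uFactor
      split_ifs with hq
      · rw [htq hq]
      · rfl
    have hrest : (uProd σ t' (q :: l))⁻¹ * uProd σ t (q :: l) =
        (uProd σ t' l)⁻¹ * uProd σ t l := by
      rw [uProd_cons, uProd_cons, hfactor]
      group
    intro r hr hrl
    rcases List.mem_cons.mp hrl with rfl | hrl
    · exact htq hr
    · exact ih hl (hrest ▸ h) r hr hrl

theorem eq_of_smallOnInvSet_uMat {t t' : {ij : Fin n × Fin n // ij ∈ InvSet n σ} → Fin p}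
    (h : SmallOnInvSet σ ((uMat p n σ t')⁻¹ * uMat p n σ t)) : t = t' :=
  funext fun ⟨r, hr⟩ => apply_eq_of_smallOnInvSet_uProd σ (pairwise_toLex_lt_finRange_product n)
    h r hr (mem_finRange_product r)

end Iwahori

theorem double_coset_perm_decomposition (σ : Equiv.Perm (Fin n)) (k : ℕ)
    (hk : len n σ = k) :
    (dcos p n (permGL p n σ) =
      ⋃ t : {ij : Fin n × Fin n // ij ∈ InvSet n σ} → Fin p,
        {x | ∃ j ∈ Jset p n, x = uMat p n σ t * permGL p n σ * j}) ∧
    Function.Injective (fun t : {ij : Fin n × Fin n // ij ∈ InvSet n σ} → Fin p =>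
      {x | ∃ j ∈ Jset p n, x = uMat p n σ t * permGL p n σ * j}) ∧
    Fintype.card ({ij : Fin n × Fin n // ij ∈ InvSet n σ} → Fin p) = p ^ k := by
  refine ⟨Set.ext fun x => ⟨?_, ?_⟩, fun t t' hcoset => ?_, ?_⟩
  · rintro ⟨a, ha, b, hb, rfl⟩
    obtain ⟨t, c, hc, hsmall, rfl⟩ := exists_uMat_mul_eq σ ha
    exact Set.mem_iUnion.mpr
      ⟨t, _, (iwahori p n).mul_mem (permGL_conj_mem_Jset hc hsmall) hb, by group⟩
  · simp only [Set.mem_iUnion]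
    rintro ⟨t, j, hj, rfl⟩
    exact ⟨_, uMat_mem_Jset σ t, j, hj, rfl⟩
  · have hmem : uMat p n σ t * permGL p n σ ∈
        {x | ∃ j ∈ Jset p n, x = uMat p n σ t' * permGL p n σ * j} :=
      congrArg (_ ∈ ·) hcoset ▸ ⟨1, (iwahori p n).one_mem, (mul_one _).symm⟩
    obtain ⟨j, hj, hjeq⟩ := hmem
    refine eq_of_smallOnInvSet_uMat σ (smallOnInvSet_of_permGL_conj_mem_Jset ?_)
    rw [← inv_mul_eq_iff_eq_mul.mpr hjeq] at hj
    simpa only [_root_.mul_inv_rev, mul_assoc] using hj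
  · rw [← hk, len, Fintype.card_fun, Fintype.card_fin, Fintype.card_coe]
end

section
/- (Bruhat–Iwahori decomposition) Every g ∈ GL_n(ℚ_p) can be written as g = u·d·w_σ·j, where u ∈ N is upper unitriangular, d ∈ T is diagonal, σ ∈ S_n, and j ∈ J. In other words, G = ⋃_{d ∈ T} ⋃_{σ ∈ S_n} N·d·w_σ·J. -/
open Matrix MeasureTheory Pointwise

variable (p n : ℕ) [Fact p.Prime]

/-!
Row reduction from the bottom row up. Right multiplication by `J` performs the column operations
`col_j += r_j • col_c` with `‖r_j‖ ≤ 1`, and `‖r_j‖ < 1` when `j < c`. If `c` is the leftmost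
entry of maximal norm in row `k`, the coefficients `r_j = -g_kj / g_kc` are of this kind, so row
`k` can be cleared outside column `c`; left multiplication by `N` then clears column `c` above
row `k`. Each treated row keeps a single nonzero entry, alone in its column, so later steps do not
disturb it, and at the end the matrix is monomial, that is, of the form `d · w_σ`.
-/

theorem Finite.exists_leftmost_max {α ι : Type*} [LinearOrder α] [LinearOrder ι] [Finite ι]
    [Nonempty ι] (g : ι → α) : ∃ c, (∀ j, g j ≤ g c) ∧ ∀ j < c, g j < g c := by
  obtain ⟨c, hc⟩ := Finite.exists_max fun j => toLex (g j, OrderDual.toDual j)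
  refine ⟨c, fun j => ?_, fun j hjc => ?_⟩
  · rcases Prod.Lex.toLex_le_toLex.1 (hc j) with h | h
    exacts [h.le, h.1.le]
  · rcases Prod.Lex.toLex_le_toLex.1 (hc j) with h | h
    exacts [h, absurd hjc (not_lt.2 h.2)]

theorem exists_add_smul_eq_single {𝕜 ι : Type*} [NormedField 𝕜] [LinearOrder ι] [Finite ι]
    (f : ι → 𝕜) (hf : f ≠ 0) :
    ∃ c r, f c ≠ 0 ∧ r c = 0 ∧ (∀ j, ‖r j‖ ≤ 1) ∧ (∀ j < c, ‖r j‖ < 1) ∧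
      f + f c • r = Pi.single c (f c) := by
  obtain ⟨j₀, hj₀⟩ := Function.ne_iff.1 hf
  have : Nonempty ι := ⟨j₀⟩
  obtain ⟨c, hmax, hleft⟩ := Finite.exists_leftmost_max fun j => ‖f j‖
  have hc : f c ≠ 0 := norm_pos_iff.1 ((norm_pos_iff.2 hj₀).trans_le (hmax j₀))
  refine ⟨c, Function.update (fun j => -(f j / f c)) c 0, hc, by simp, fun j => ?_, fun j hj => ?_, ?_⟩
  · rcases eq_or_ne j c with rfl | hj
    · simp
    · simpa [hj, div_le_one (norm_pos_iff.2 hc)] using hmax j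
  · simpa [hj.ne, div_lt_one (norm_pos_iff.2 hc)] using hleft j hj
  · ext j
    rcases eq_or_ne j c with rfl | hj
    · simp
    · simp [hj, mul_div_cancel₀ _ hc]

namespace Matrix

open GeneralLinearGroup

section VecMulVec

variable {R ι : Type*} [CommRing R] [Fintype ι] [DecidableEq ι]

def GeneralLinearGroup.oneAddVecMulVec (x y : ι → R) (h : y ⬝ᵥ x = 0) : GL ι R where
  val := 1 + vecMulVec x y
  inv := 1 + vecMulVec x (-y)
  val_inv := by simp [mul_add, add_mul, vecMulVec_mul_vecMulVec, h, vecMulVec_neg]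
  inv_val := by simp [mul_add, add_mul, vecMulVec_mul_vecMulVec, h, vecMulVec_neg]

namespace GeneralLinearGroup

theorem coe_oneAddVecMulVec (x y : ι → R) (h : y ⬝ᵥ x = 0) :
    (oneAddVecMulVec x y h : Matrix ι ι R) = 1 + vecMulVec x y := rfl

theorem oneAddVecMulVec_inv (x y : ι → R) (h : y ⬝ᵥ x = 0) :
    (oneAddVecMulVec x y h)⁻¹ = oneAddVecMulVec x (-y) (by simp [h]) :=
  Units.ext rfl

end GeneralLinearGroup

theorem mul_one_add_vecMulVec_single (A : Matrix ι ι R) (c : ι) (r : ι → R) :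
    A * (1 + vecMulVec (Pi.single c 1) r) = A + vecMulVec (A.col c) r := by
  rw [mul_add, mul_one, mul_vecMulVec, mulVec_single_one]

theorem one_add_vecMulVec_single_mul (A : Matrix ι ι R) (k : ι) (v : ι → R) :
    (1 + vecMulVec v (Pi.single k 1)) * A = A + vecMulVec v (A.row k) := by
  rw [add_mul, one_mul, vecMulVec_mul, single_one_vecMul]

end VecMulVec

section Iwahori

variable {𝕜 ι : Type*} [NormedField 𝕜] [LinearOrder ι]

def IsIwahori (M : Matrix ι ι 𝕜) : Prop :=
  (∀ i j, ‖M i j‖ ≤ 1) ∧ ∀ i j, j < i → ‖M i j‖ < 1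

theorem isIwahori_one : IsIwahori (1 : Matrix ι ι 𝕜) := by
  refine ⟨fun i j => ?_, fun i j hji => ?_⟩
  · by_cases h : i = j <;> simp [one_apply, h]
  · simp [one_apply_ne hji.ne']

theorem isIwahori_vecMulVec_single {c : ι} {r : ι → 𝕜} (hr : ∀ j, ‖r j‖ ≤ 1)
    (hrc : ∀ j < c, ‖r j‖ < 1) : IsIwahori (vecMulVec (Pi.single c 1) r) := by
  refine ⟨fun i j => ?_, fun i j hji => ?_⟩ <;>
    rcases eq_or_ne i c with rfl | hi <;> simp [vecMulVec_apply, *]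

variable [IsUltrametricDist 𝕜]

theorem IsIwahori.add {A B : Matrix ι ι 𝕜} (hA : IsIwahori A) (hB : IsIwahori B) :
    IsIwahori (A + B) :=
  ⟨fun i j => (IsUltrametricDist.norm_add_le_max _ _).trans (max_le (hA.1 i j) (hB.1 i j)),
    fun i j hji =>
      (IsUltrametricDist.norm_add_le_max _ _).trans_lt (max_lt (hA.2 i j hji) (hB.2 i j hji))⟩

variable [Fintype ι]

/-- In a product entry below the diagonal, every term `A i k * B k j` has a factor strictly
below the diagonal: `A i k` if `k < i`, and `B k j` otherwise. -/
theorem IsIwahori.mul {A B : Matrix ι ι 𝕜} (hA : IsIwahori A) (hB : IsIwahori B) :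
    IsIwahori (A * B) := by
  refine ⟨fun i j => ?_, fun i j hji => ?_⟩
  · refine IsUltrametricDist.norm_sum_le_of_forall_le_of_nonneg zero_le_one fun k _ => ?_
    rw [norm_mul]
    exact mul_le_one₀ (hA.1 i k) (norm_nonneg _) (hB.1 k j)
  · refine ((Finset.univ_nonempty_iff.2 ⟨i⟩).norm_sum_le_sup'_norm _).trans_lt ?_
    refine (Finset.sup'_lt_iff _).2 fun k _ => ?_
    rw [norm_mul]
    rcases lt_or_ge k i with hki | hik
    · exact mul_lt_one_of_nonneg_of_lt_one_left (norm_nonneg _) (hA.2 i k hki) (hB.1 k j)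
    · exact mul_lt_one_of_nonneg_of_lt_one_right (hA.1 i k) (norm_nonneg _)
        (hB.2 k j (hji.trans_le hik))

variable (𝕜 ι) in
def iwahoriSubgroup : Subgroup (GL ι 𝕜) where
  carrier := {g | IsIwahori (g : Matrix ι ι 𝕜) ∧ IsIwahori (↑g⁻¹ : Matrix ι ι 𝕜)}
  mul_mem' ha hb := ⟨by simpa using ha.1.mul hb.1, by simpa using hb.2.mul ha.2⟩
  one_mem' := by simpa using isIwahori_one
  inv_mem' ha := by simpa using ha.symm

theorem oneAddVecMulVec_single_mem_iwahoriSubgroup {c : ι} {r : ι → 𝕜}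
    (h : r ⬝ᵥ Pi.single c 1 = 0) (hr : ∀ j, ‖r j‖ ≤ 1) (hrc : ∀ j < c, ‖r j‖ < 1) :
    oneAddVecMulVec (Pi.single c 1) r h ∈ iwahoriSubgroup 𝕜 ι := by
  refine ⟨isIwahori_one.add (isIwahori_vecMulVec_single hr hrc), ?_⟩
  rw [oneAddVecMulVec_inv, coe_oneAddVecMulVec]
  exact isIwahori_one.add (isIwahori_vecMulVec_single (by simpa using hr) (by simpa using hrc))

end Iwahori

section Unitriangular

variable {R ι : Type*} [CommRing R] [LinearOrder ι]

def IsUnitriangular (M : Matrix ι ι R) : Prop :=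
  M.IsUpperTriangular ∧ ∀ i, M i i = 1

theorem isUnitriangular_one : IsUnitriangular (1 : Matrix ι ι R) :=
  ⟨blockTriangular_one, fun _ => one_apply_eq _⟩

theorem isUnitriangular_one_add_vecMulVec_single {k : ι} {v : ι → R} (hv : ∀ i, k ≤ i → v i = 0) :
    IsUnitriangular (1 + vecMulVec v (Pi.single k 1)) := by
  refine ⟨fun i j (hji : j < i) => ?_, fun i => ?_⟩
  · rcases eq_or_ne j k with rfl | hj
    · simp [vecMulVec_apply, one_apply_ne hji.ne', hv i hji.le]
    · simp [vecMulVec_apply, one_apply_ne hji.ne', hj]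
  · rcases eq_or_ne i k with rfl | hi
    · simp [vecMulVec_apply, hv i le_rfl]
    · simp [vecMulVec_apply, hi]

variable [Fintype ι]

theorem IsUnitriangular.mul {A B : Matrix ι ι R} (hA : IsUnitriangular A)
    (hB : IsUnitriangular B) : IsUnitriangular (A * B) := by
  refine ⟨hA.1.mul hB.1, fun i => ?_⟩
  rw [mul_apply, Finset.sum_eq_single i, hA.2, hB.2, one_mul]
  · intro k _ hki
    rcases lt_or_gt_of_ne hki with hki | hik
    · rw [hA.1 hki, zero_mul]
    · rw [hB.1 hik, mul_zero]
  · simp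

variable (R ι) in
def unitriangularSubgroup : Subgroup (GL ι R) where
  carrier := {g | IsUnitriangular (g : Matrix ι ι R) ∧ IsUnitriangular (↑g⁻¹ : Matrix ι ι R)}
  mul_mem' ha hb := ⟨by simpa using ha.1.mul hb.1, by simpa using hb.2.mul ha.2⟩
  one_mem' := by simpa using isUnitriangular_one
  inv_mem' ha := by simpa using ha.symm

theorem oneAddVecMulVec_single_mem_unitriangularSubgroup {k : ι} {v : ι → R}
    (h : Pi.single k 1 ⬝ᵥ v = 0) (hv : ∀ i, k ≤ i → v i = 0) :
    oneAddVecMulVec v (Pi.single k 1) h ∈ unitriangularSubgroup R ι := by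
  refine ⟨isUnitriangular_one_add_vecMulVec_single hv, ?_⟩
  rw [oneAddVecMulVec_inv, coe_oneAddVecMulVec, vecMulVec_neg, ← neg_vecMulVec]
  exact isUnitriangular_one_add_vecMulVec_single (by simpa using hv)

end Unitriangular

section Isolated

variable {R ι : Type*}

def IsIsolatedEntry [Zero R] (A : Matrix ι ι R) (i c : ι) : Prop :=
  A i c ≠ 0 ∧ (∀ j ≠ c, A i j = 0) ∧ ∀ i' ≠ i, A i' c = 0

theorem IsIsolatedEntry.congr [Zero R] {A B : Matrix ι ι R} {i c : ι} (h : IsIsolatedEntry A i c)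
    (hrow : ∀ j, B i j = A i j) (hcol : ∀ i', B i' c = A i' c) : IsIsolatedEntry B i c := by
  simpa only [IsIsolatedEntry, hrow, hcol] using h

theorem IsIsolatedEntry.apply_eq_zero [Zero R] {A : Matrix ι ι R} {i c k l : ι}
    (h : IsIsolatedEntry A i c) (hki : k ≠ i) (hkl : A k l ≠ 0) : A i l = 0 :=
  h.2.1 l fun hlc => hkl (hlc ▸ h.2.2 k hki)

theorem exists_eq_diagonal_mul_permMatrix [Semiring R] [Fintype ι] [DecidableEq ι]
    {A : Matrix ι ι R} (hA : ∀ i, ∃ c, IsIsolatedEntry A i c) :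
    ∃ (σ : Equiv.Perm ι) (m : ι → R), (∀ i, m i ≠ 0) ∧ A = diagonal m * (σ.permMatrix R)ᵀ := by
  choose c hc using hA
  have hinj : Function.Injective c := fun i i' hii' => by
    by_contra hne
    exact (hc i').1 (hii' ▸ (hc i).2.2 i' (Ne.symm hne))
  refine ⟨(Equiv.ofBijective c hinj.bijective_of_finite)⁻¹, fun i => A i (c i), fun i => (hc i).1, ?_⟩
  ext i j
  rw [transpose_permMatrix, inv_inv, diagonal_mul]
  rcases eq_or_ne j (c i) with rfl | hj
  · simp
  · simp [Equiv.toPEquiv_apply, PEquiv.toMatrix_apply, (hc i).2.1 j hj, Ne.symm hj]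

def RowsIsolatedFrom [Zero R] {n : ℕ} (k : ℕ) (A : Matrix (Fin n) (Fin n) R) : Prop :=
  ∀ i : Fin n, k ≤ i → ∃ c, IsIsolatedEntry A i c

end Isolated

section Reduction

open DoubleCoset

variable {𝕜 : Type*} [NormedField 𝕜] [IsUltrametricDist 𝕜] {n : ℕ}

theorem exists_mem_doubleCoset_rowsIsolatedFrom_of_succ (g : GL (Fin n) 𝕜) (k : Fin n)
    (hg : RowsIsolatedFrom (k + 1) (g : Matrix (Fin n) (Fin n) 𝕜)) :
    ∃ g', g ∈ doubleCoset g' (unitriangularSubgroup 𝕜 (Fin n)) (iwahoriSubgroup 𝕜 (Fin n)) ∧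
      RowsIsolatedFrom k (g' : Matrix (Fin n) (Fin n) 𝕜) := by
  set A : Matrix (Fin n) (Fin n) 𝕜 := ↑g with hA
  have hAk : A k ≠ 0 := fun h => g.det_ne_zero (det_eq_zero_of_row_eq_zero k (congrFun h))
  obtain ⟨c, r, hc, hrc, hr, hr_lt, hclear⟩ := exists_add_smul_eq_single (A k) hAk
  have hclear' (l : Fin n) : A k l + A k c * r l = (Pi.single c (A k c) : Fin n → 𝕜) l := by
    simpa using congrFun hclear l
  let v : Fin n → 𝕜 := fun i => if i < k then -(A i c / A k c) else 0
  have hv (i : Fin n) (hi : k ≤ i) : v i = 0 := if_neg (not_lt.2 hi)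
  let u := oneAddVecMulVec v (Pi.single k 1) (by simp [hv])
  let j := oneAddVecMulVec (Pi.single c 1) r (by simp [hrc])
  have hu : u ∈ unitriangularSubgroup 𝕜 (Fin n) :=
    oneAddVecMulVec_single_mem_unitriangularSubgroup _ hv
  have hj : j ∈ iwahoriSubgroup 𝕜 (Fin n) :=
    oneAddVecMulVec_single_mem_iwahoriSubgroup _ hr hr_lt
  refine ⟨u * g * j, mem_doubleCoset.2 ⟨u⁻¹, inv_mem hu, j⁻¹, inv_mem hj, by group⟩, ?_⟩
  have hentry (i l : Fin n) : (↑(u * g * j) : Matrix (Fin n) (Fin n) 𝕜) i l =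
      A i l + A i c * r l + v i * (Pi.single c (A k c) : Fin n → 𝕜) l := by
    have hrow : (A + vecMulVec (A.col c) r).row k = Pi.single c (A k c) := by
      rw [← hclear]; ext; simp [vecMulVec_apply]
    rw [mul_assoc, Units.val_mul, Units.val_mul, coe_oneAddVecMulVec, coe_oneAddVecMulVec,
      ← hA, mul_one_add_vecMulVec_single, one_add_vecMulVec_single_mul, hrow]
    simp [vecMulVec_apply]
  have hAc (i : Fin n) (hi : k < i) : A i c = 0 := by
    obtain ⟨c', hc'⟩ := hg i hi
    exact hc'.apply_eq_zero hi.ne hc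
  intro i hi
  rcases (Fin.le_def.2 hi).eq_or_lt with rfl | hi
  · refine ⟨c, ?_, fun l hl => ?_, fun i' hi' => ?_⟩
    · simpa [hentry, hrc, hv] using hc
    · simpa [hentry, hv, hl] using hclear' l
    · rcases lt_or_gt_of_ne hi' with hi' | hi'
      · simp [hentry, hrc, v, hi', hc]
      · simp [hentry, hrc, hv _ hi'.le, hAc _ hi']
  · obtain ⟨c', hc'⟩ := hg i hi
    have hkc' : A k c' = 0 := hc'.2.2 k hi.ne
    have hcc' : c' ≠ c := fun h => hc (h ▸ hkc')
    have hrc' : r c' = 0 := by simpa [hkc', hcc', hc] using hclear' c'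
    exact ⟨c', hc'.congr (fun l => by simp [hentry, hAc i hi, hv i hi.le])
      fun i' => by simp [hentry, hrc', hcc']⟩

theorem exists_mem_doubleCoset_rowsIsolatedFrom_zero (k : ℕ) (g : GL (Fin n) 𝕜)
    (hg : RowsIsolatedFrom k (g : Matrix (Fin n) (Fin n) 𝕜)) :
    ∃ g', g ∈ doubleCoset g' (unitriangularSubgroup 𝕜 (Fin n)) (iwahoriSubgroup 𝕜 (Fin n)) ∧
      RowsIsolatedFrom 0 (g' : Matrix (Fin n) (Fin n) 𝕜) := by
  induction k generalizing g with
  | zero => exact ⟨g, mem_doubleCoset_self _ _ g, hg⟩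
  | succ k ih =>
    rcases lt_or_ge k n with hk | hk
    · obtain ⟨g₁, hg₁, h₁⟩ := exists_mem_doubleCoset_rowsIsolatedFrom_of_succ g ⟨k, hk⟩ hg
      obtain ⟨g', hg', h'⟩ := ih g₁ h₁
      exact ⟨g', doubleCoset_eq_of_mem hg' ▸ hg₁, h'⟩
    · exact ih g fun i hi => absurd (i.is_lt.trans_le hk) hi.not_gt

theorem exists_mem_doubleCoset_forall_isIsolatedEntry (g : GL (Fin n) 𝕜) :
    ∃ g', g ∈ doubleCoset g' (unitriangularSubgroup 𝕜 (Fin n)) (iwahoriSubgroup 𝕜 (Fin n)) ∧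
      ∀ i, ∃ c, IsIsolatedEntry (g' : Matrix (Fin n) (Fin n) 𝕜) i c := by
  obtain ⟨g', hg, hg'⟩ :=
    exists_mem_doubleCoset_rowsIsolatedFrom_zero n g fun i hi => absurd i.is_lt hi.not_gt
  exact ⟨g', hg, fun i => hg' i i.val.zero_le⟩

end Reduction

end Matrix

theorem bruhat_iwahori_decomposition (g : GL (Fin n) ℚ_[p]) :
    ∃ u ∈ Nset p n, ∃ d ∈ Tset p n, ∃ σ : Equiv.Perm (Fin n), ∃ j ∈ Jset p n,
      g = u * d * permGL p n σ * j := by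
  obtain ⟨g', hg, hg'⟩ := exists_mem_doubleCoset_forall_isIsolatedEntry g
  obtain ⟨σ, m, hm, hg'_eq⟩ := exists_eq_diagonal_mul_permMatrix hg'
  obtain ⟨u, hu, j, hj, rfl⟩ := DoubleCoset.mem_doubleCoset.1 hg
  let d := GeneralLinearGroup.mkOfDetNeZero (diagonal m)
    (by simpa [det_diagonal, Finset.prod_ne_zero_iff] using hm)
  have hg'_eq : g' = d * permGL p n σ := Units.ext hg'_eq
  refine ⟨u, ⟨hu.1.2, fun i j h => hu.1.1 h⟩, d, fun i j h => diagonal_apply_ne m h, σ, j,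
    ⟨hj.1.1, hj.2.1, hj.1.2⟩, ?_⟩
  simp only [hg'_eq, mul_assoc]
end

section
/- For every d ∈ T⁺, the double coset J·d·J is contained in N_O·d·J; that is, every element of J·d·J can be written as u·d·j with u upper unitriangular with entries in ℤ_p and j ∈ J. -/
open Matrix MeasureTheory Pointwise

variable (p n : ℕ) [Fact p.Prime]

/-!
Every `a ∈ J` factors as `a = u ℓ` with `u ∈ N_O` and `ℓ ∈ J` lower triangular: clear the
entries above the diagonal column by column, from the right, by left multiplication with integral
unipotent upper triangular matrices. Each pivot `ℓ_cc` is a unit, since in the `(c,c)` entry of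
`ℓ ℓ⁻¹ = 1` every other term has norm `< 1`. For dominant `d` the entries
`(d⁻¹ ℓ d)_ij = ℓ_ij d_j / d_i` (`j ≤ i`) have `|d_j| ≤ |d_i|`, so `d⁻¹ ℓ d ∈ J`, and
`a d b = u d (d⁻¹ ℓ d) b`.
-/

open Finset

section Ultrametric

variable {R : Type*} [NormedRing R] [IsUltrametricDist R]

lemma norm_sum_lt_one {α : Type*} {s : Finset α} {f : α → R} (h : ∀ i ∈ s, ‖f i‖ < 1) :
    ‖∑ i ∈ s, f i‖ < 1 := by
  have := (IsUltrametricDist.ball_openAddSubgroup R zero_lt_one).sum_mem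
    fun i hi => mem_ball_zero_iff.mpr (h i hi)
  exact mem_ball_zero_iff.mp this

namespace Matrix

variable {ι : Type*} [Fintype ι] {A B : Matrix ι ι R}

lemma norm_mul_apply_le_one (hA : ∀ i j, ‖A i j‖ ≤ 1) (hB : ∀ i j, ‖B i j‖ ≤ 1) (i j : ι) :
    ‖(A * B) i j‖ ≤ 1 :=
  IsUltrametricDist.norm_sum_le_of_forall_le_of_nonneg zero_le_one fun k _ =>
    (norm_mul_le _ _).trans (mul_le_one₀ (hA i k) (norm_nonneg _) (hB k j))

variable [LinearOrder ι]

lemma norm_mul_apply_lt_one (hA : ∀ i j, ‖A i j‖ ≤ 1) (hB : ∀ i j, ‖B i j‖ ≤ 1)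
    (hA' : ∀ i j, j < i → ‖A i j‖ < 1) (hB' : ∀ i j, j < i → ‖B i j‖ < 1) {i j : ι}
    (hij : j < i) : ‖(A * B) i j‖ < 1 :=
  norm_sum_lt_one fun k _ => (norm_mul_le _ _).trans_lt <| by
    rcases lt_or_ge k i with hki | hik
    · exact mul_lt_one_of_nonneg_of_lt_one_left (norm_nonneg _) (hA' i k hki) (hB k j)
    · exact mul_lt_one_of_nonneg_of_lt_one_right (hA i k) (norm_nonneg _)
        (hB' k j (hij.trans_le hik))

lemma norm_apply_self_eq_one [NormOneClass R] [DecidableEq ι] (hAB : A * B = 1)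
    (hA : ∀ i j, ‖A i j‖ ≤ 1) (hB : ∀ i j, ‖B i j‖ ≤ 1) (hA' : ∀ i j, j < i → ‖A i j‖ < 1)
    {c : ι} (hc : ∀ j, c < j → A c j = 0) : ‖A c c‖ = 1 := by
  have hrest : ‖∑ k ∈ univ.erase c, A c k * B k c‖ < 1 := norm_sum_lt_one fun k hk => by
    rcases lt_or_gt_of_ne (ne_of_mem_erase hk) with hkc | hck
    · exact (norm_mul_le _ _).trans_lt
        (mul_lt_one_of_nonneg_of_lt_one_left (norm_nonneg _) (hA' c k hkc) (hB k c))
    · simp [hc k hck]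
  have hdiag : A c c * B c c = 1 + -∑ k ∈ univ.erase c, A c k * B k c := by
    rw [← sub_eq_add_neg, eq_sub_iff_add_eq,
      add_sum_erase _ (fun k => A c k * B k c) (mem_univ c), ← mul_apply, hAB, one_apply_eq]
  have hnorm : ‖A c c * B c c‖ = 1 := by
    rw [hdiag, IsUltrametricDist.norm_add_eq_max_of_norm_ne_norm
      (by rw [norm_one, norm_neg]; exact hrest.ne'), norm_one, norm_neg, max_eq_left hrest.le]
  refine le_antisymm (hA c c) ?_
  calc 1 = ‖A c c * B c c‖ := hnorm.symm
    _ ≤ ‖A c c‖ * ‖B c c‖ := norm_mul_le _ _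
    _ ≤ ‖A c c‖ := mul_le_of_le_one_right (norm_nonneg _) (hB c c)

end Matrix

end Ultrametric

namespace Matrix

section Triangular

variable {R ι : Type*}

lemma norm_one_apply_le_one [NormedRing R] [NormOneClass R] [DecidableEq ι] (i j : ι) :
    ‖(1 : Matrix ι ι R) i j‖ ≤ 1 := by
  by_cases h : i = j
  · rw [h, one_apply_eq, norm_one]
  · rw [one_apply_ne h, norm_zero]
    exact zero_le_one

variable [Fintype ι] [LinearOrder ι]

lemma IsUpperTriangular.mul_apply_self [NonUnitalNonAssocSemiring R] {A B : Matrix ι ι R}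
    (hA : A.IsUpperTriangular) (hB : B.IsUpperTriangular) (i : ι) :
    (A * B) i i = A i i * B i i := by
  refine sum_eq_single i (fun k _ hki => show A i k * B k i = 0 from ?_) (by simp)
  rcases lt_or_gt_of_ne hki with hlt | hgt
  · rw [hA hlt, zero_mul]
  · rw [hB hgt, mul_zero]

lemma GeneralLinearGroup.isLowerTriangular_coe_inv [CommRing R] [DecidableEq ι] {g : GL ι R}
    (hg : (g : Matrix ι ι R).IsLowerTriangular) :
    ((g⁻¹ : GL ι R) : Matrix ι ι R).IsLowerTriangular := by
  let := g.invertible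
  rw [coe_units_inv]
  exact blockTriangular_inv_of_blockTriangular hg

end Triangular

variable {R ι : Type*} [Ring R] [LinearOrder ι]

def colAbove (c : ι) (t : ι → R) : Matrix ι ι R :=
  of fun i j => if j = c ∧ i < c then t i else 0

lemma colAbove_zero (c : ι) : colAbove c (0 : ι → R) = 0 := by
  ext i j
  simp [colAbove]

lemma colAbove_add (c : ι) (s t : ι → R) : colAbove c (s + t) = colAbove c s + colAbove c t := by
  ext i j
  simp only [colAbove, of_apply, add_apply, Pi.add_apply]
  split_ifs <;> simp

variable [Fintype ι]

lemma colAbove_mul_colAbove (c : ι) (s t : ι → R) : colAbove c s * colAbove c t = 0 := by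
  ext i j
  refine sum_eq_zero fun k _ => ?_
  simp only [colAbove, of_apply]
  split_ifs with hj hk <;> simp_all

lemma colAbove_mul_apply (c : ι) (t : ι → R) (A : Matrix ι ι R) (i j : ι) :
    (colAbove c t * A) i j = if i < c then t i * A c j else 0 := by
  rw [mul_apply, sum_eq_single c (fun k _ hk => by simp [colAbove, hk]) (by simp)]
  simp [colAbove]

variable [DecidableEq ι]

lemma one_add_colAbove_mul (c : ι) (s t : ι → R) :
    (1 + colAbove c s) * (1 + colAbove c t) = 1 + colAbove c (s + t) := by
  rw [mul_add, add_mul, add_mul, colAbove_mul_colAbove, colAbove_add]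
  noncomm_ring

def transvectionCol (c : ι) (t : ι → R) : GL ι R where
  val := 1 + colAbove c t
  inv := 1 + colAbove c (-t)
  val_inv := by rw [one_add_colAbove_mul, add_neg_cancel, colAbove_zero, add_zero]
  inv_val := by rw [one_add_colAbove_mul, neg_add_cancel, colAbove_zero, add_zero]

lemma transvectionCol_inv (c : ι) (t : ι → R) : (transvectionCol c t)⁻¹ = transvectionCol c (-t) := Units.ext rfl

lemma transvectionCol_apply (c : ι) (t : ι → R) (i j : ι) :
    (transvectionCol c t : Matrix ι ι R) i j = (1 : Matrix ι ι R) i j + colAbove c t i j :=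
  rfl

lemma transvectionCol_mul_apply (c : ι) (t : ι → R) (A : Matrix ι ι R) (i j : ι) :
    ((transvectionCol c t : Matrix ι ι R) * A) i j = A i j + if i < c then t i * A c j else 0 := by
  rw [show (transvectionCol c t : Matrix ι ι R) = 1 + colAbove c t from rfl, add_mul, one_mul, add_apply,
    colAbove_mul_apply]

end Matrix

section Iwahori

variable {p n : ℕ} [Fact p.Prime]

def NOset (p n : ℕ) [Fact p.Prime] : Set (GL (Fin n) ℚ_[p]) :=
  {u | u ∈ Nset p n ∧ ∀ i j, ‖entry p n u i j‖ ≤ 1}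

lemma mul_mem_Jset {g h : GL (Fin n) ℚ_[p]} (hg : g ∈ Jset p n) (hh : h ∈ Jset p n) :
    g * h ∈ Jset p n :=
  ⟨Matrix.norm_mul_apply_le_one hg.1 hh.1,
    by rw [_root_.mul_inv_rev]; exact Matrix.norm_mul_apply_le_one hh.2.1 hg.2.1,
    fun _ _ hij => Matrix.norm_mul_apply_lt_one hg.1 hh.1 hg.2.2 hh.2.2 hij⟩

lemma one_mem_NOset : (1 : GL (Fin n) ℚ_[p]) ∈ NOset p n :=
  ⟨⟨fun i => Matrix.one_apply_eq i, fun _ _ hij => Matrix.one_apply_ne hij.ne'⟩,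
    Matrix.norm_one_apply_le_one⟩

lemma mul_mem_NOset {u v : GL (Fin n) ℚ_[p]} (hu : u ∈ NOset p n) (hv : v ∈ NOset p n) :
    u * v ∈ NOset p n := by
  have hu' : (u : Matrix (Fin n) (Fin n) ℚ_[p]).IsUpperTriangular := fun i j => hu.1.2 i j
  have hv' : (v : Matrix (Fin n) (Fin n) ℚ_[p]).IsUpperTriangular := fun i j => hv.1.2 i j
  refine ⟨⟨fun i => ?_, fun i j hij => (hu'.mul hv') hij⟩, Matrix.norm_mul_apply_le_one hu.2 hv.2⟩
  rw [entry, Units.val_mul, hu'.mul_apply_self hv', ← entry, ← entry, hu.1.1, hv.1.1, one_mul]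

lemma transvectionCol_mem_NOset {c : Fin n} {t : Fin n → ℚ_[p]} (ht : ∀ i, ‖t i‖ ≤ 1) :
    Matrix.transvectionCol c t ∈ NOset p n := by
  refine ⟨⟨fun i => ?_, fun i j hij => ?_⟩, fun i j => ?_⟩ <;>
    simp only [entry, Matrix.transvectionCol_apply, Matrix.colAbove, Matrix.of_apply]
  · rw [Matrix.one_apply_eq, if_neg fun h => (h.2.trans_eq h.1.symm).false, add_zero]
  · rw [Matrix.one_apply_ne hij.ne', if_neg fun h => (h.1 ▸ hij).asymm h.2, add_zero]
  · split_ifs with h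
    · rw [Matrix.one_apply_ne (h.2.trans_eq h.1.symm).ne, zero_add]
      exact ht i
    · rw [add_zero]
      exact Matrix.norm_one_apply_le_one i j

lemma transvectionCol_mem_Jset {c : Fin n} {t : Fin n → ℚ_[p]} (ht : ∀ i, ‖t i‖ ≤ 1) :
    Matrix.transvectionCol c t ∈ Jset p n := by
  have h := transvectionCol_mem_NOset (c := c) ht
  have h' := transvectionCol_mem_NOset (c := c) (t := -t) (by simpa using ht)
  rw [← Matrix.transvectionCol_inv] at h'
  exact ⟨h.2, h'.2, fun i j hij => by rw [h.1.2 i j hij, norm_zero]; exact zero_lt_one⟩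

lemma exists_transvectionCol_clear_column {ℓ : GL (Fin n) ℚ_[p]} (hℓ : ℓ ∈ Jset p n) {c : Fin n}
    (hc : ∀ j, c < j → entry p n ℓ c j = 0) :
    ∃ t : Fin n → ℚ_[p], (∀ i, ‖t i‖ ≤ 1) ∧
      (∀ i < c, entry p n (Matrix.transvectionCol c t * ℓ) i c = 0) ∧
      ∀ i j, entry p n ℓ c j = 0 → entry p n (Matrix.transvectionCol c t * ℓ) i j = entry p n ℓ i j := by
  have hpivot : ‖entry p n ℓ c c‖ = 1 :=
    Matrix.norm_apply_self_eq_one (Units.mul_inv ℓ) hℓ.1 hℓ.2.1 hℓ.2.2 hc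
  have hpivot_ne : entry p n ℓ c c ≠ 0 := norm_ne_zero_iff.mp (hpivot ▸ one_ne_zero)
  refine ⟨fun i => -(entry p n ℓ i c / entry p n ℓ c c), fun i => ?_, fun i hi => ?_,
    fun i j hj => ?_⟩
  · rw [norm_neg, norm_div, hpivot, div_one]
    exact hℓ.1 i c
  · rw [entry, Units.val_mul, Matrix.transvectionCol_mul_apply, if_pos hi, ← entry, ← entry]
    field_simp
    ring
  · rw [entry, Units.val_mul, Matrix.transvectionCol_mul_apply, ← entry, ← entry, hj]
    simp

lemma exists_NOset_mul_cleared {a : GL (Fin n) ℚ_[p]} (ha : a ∈ Jset p n) (s : Finset (Fin n))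
    (hs : IsUpperSet (s : Set (Fin n))) :
    ∃ u ∈ NOset p n, ∃ ℓ ∈ Jset p n, a = u * ℓ ∧ ∀ j ∈ s, ∀ i < j, entry p n ℓ i j = 0 := by
  induction s using Finset.induction_on_min with
  | empty => exact ⟨1, one_mem_NOset, a, ha, (one_mul a).symm, by simp⟩
  | insert c s hcs ih =>
    have hs' : IsUpperSet (s : Set (Fin n)) := fun x y hxy hx => by
      rcases Finset.mem_insert.mp (hs hxy (Finset.mem_insert_of_mem hx)) with rfl | hy
      · exact absurd hxy (hcs x hx).not_ge
      · exact hy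
    obtain ⟨u, hu, ℓ, hℓ, rfl, hcleared⟩ := ih hs'
    have hrow : ∀ j, c < j → entry p n ℓ c j = 0 := fun j hj =>
      hcleared j ((Finset.mem_insert.mp (hs hj.le (Finset.mem_insert_self c s))).resolve_left
        hj.ne') c hj
    obtain ⟨t, ht, hclear, hkeep⟩ := exists_transvectionCol_clear_column hℓ hrow
    refine ⟨u * Matrix.transvectionCol c (-t), mul_mem_NOset hu (transvectionCol_mem_NOset (by simpa using ht)),
      Matrix.transvectionCol c t * ℓ, mul_mem_Jset (transvectionCol_mem_Jset ht) hℓ, ?_, fun j hj i hij => ?_⟩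
    · rw [← Matrix.transvectionCol_inv]
      group
    · rcases Finset.mem_insert.mp hj with rfl | hj
      · exact hclear i hij
      · rw [hkeep i j (hrow j (hcs j hj))]
        exact hcleared j hj i hij

lemma exists_NOset_mul_isLowerTriangular {a : GL (Fin n) ℚ_[p]} (ha : a ∈ Jset p n) :
    ∃ u ∈ NOset p n, ∃ ℓ ∈ Jset p n, a = u * ℓ ∧
      (ℓ : Matrix (Fin n) (Fin n) ℚ_[p]).IsLowerTriangular := by
  obtain ⟨u, hu, ℓ, hℓ, rfl, hcleared⟩ :=
    exists_NOset_mul_cleared ha Finset.univ (by simp [isUpperSet_univ])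
  exact ⟨u, hu, ℓ, hℓ, rfl, fun i j hij => hcleared j (Finset.mem_univ j) i hij⟩

lemma coe_eq_diagonal_of_mem_Tset {d : GL (Fin n) ℚ_[p]} (hd : d ∈ Tset p n) :
    (d : Matrix (Fin n) (Fin n) ℚ_[p]) = Matrix.diagonal fun i => entry p n d i i := by
  ext i j
  by_cases h : i = j
  · subst h
    rw [Matrix.diagonal_apply_eq]
    rfl
  · rw [Matrix.diagonal_apply_ne _ h]
    exact hd i j h

lemma entry_self_ne_zero_of_mem_Tset {d : GL (Fin n) ℚ_[p]} (hd : d ∈ Tset p n) (i : Fin n) :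
    entry p n d i i ≠ 0 := by
  intro h
  have := congrFun (congrFun (Units.mul_inv d) i) i
  rw [coe_eq_diagonal_of_mem_Tset hd, Matrix.diagonal_mul, h, zero_mul,
    Matrix.one_apply_eq] at this
  exact zero_ne_one this

lemma entry_inv_mul_mul_of_mem_Tset {d : GL (Fin n) ℚ_[p]} (hd : d ∈ Tset p n)
    (g : GL (Fin n) ℚ_[p]) (i j : Fin n) :
    entry p n (d⁻¹ * g * d) i j = (entry p n d i i)⁻¹ * entry p n g i j * entry p n d j j := by
  have key : (d : Matrix (Fin n) (Fin n) ℚ_[p]) * (d⁻¹ * g * d : GL (Fin n) ℚ_[p]) = g * d := by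
    rw [← Units.val_mul, ← Units.val_mul]
    group
  have key_ij := congrFun (congrFun key i) j
  rw [coe_eq_diagonal_of_mem_Tset hd, Matrix.diagonal_mul, Matrix.mul_diagonal] at key_ij
  rw [mul_assoc _ (entry p n g i j), eq_inv_mul_iff_mul_eq₀ (entry_self_ne_zero_of_mem_Tset hd i)]
  exact key_ij

lemma norm_entry_le_of_mem_Tplus {d : GL (Fin n) ℚ_[p]} (hd : d ∈ Tplus p n) {i j : Fin n}
    (hji : j ≤ i) : ‖entry p n d j j‖ ≤ ‖entry p n d i i‖ := by
  rw [Padic.norm_eq_zpow_neg_valuation (entry_self_ne_zero_of_mem_Tset hd.1 j),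
    Padic.norm_eq_zpow_neg_valuation (entry_self_ne_zero_of_mem_Tset hd.1 i)]
  exact zpow_le_zpow_right₀ (mod_cast (Fact.out : p.Prime).one_le) (neg_le_neg (hd.2 hji))

lemma norm_entry_inv_mul_mul_le {d g : GL (Fin n) ℚ_[p]} (hd : d ∈ Tplus p n)
    (hg : (g : Matrix (Fin n) (Fin n) ℚ_[p]).IsLowerTriangular) (i j : Fin n) :
    ‖entry p n (d⁻¹ * g * d) i j‖ ≤ ‖entry p n g i j‖ := by
  rw [entry_inv_mul_mul_of_mem_Tset hd.1]
  rcases lt_or_ge i j with hij | hji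
  · rw [show entry p n g i j = 0 from hg hij]
    simp
  · rw [mul_comm, ← mul_assoc, norm_mul, norm_mul, norm_inv]
    refine mul_le_of_le_one_left (norm_nonneg _) ?_
    rw [← div_eq_mul_inv]
    exact div_le_one_of_le₀ (norm_entry_le_of_mem_Tplus hd hji) (norm_nonneg _)

lemma inv_mul_mul_mem_Jset {d ℓ : GL (Fin n) ℚ_[p]} (hd : d ∈ Tplus p n) (hℓ : ℓ ∈ Jset p n)
    (hlow : (ℓ : Matrix (Fin n) (Fin n) ℚ_[p]).IsLowerTriangular) :
    d⁻¹ * ℓ * d ∈ Jset p n := by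
  refine ⟨fun i j => (norm_entry_inv_mul_mul_le hd hlow i j).trans (hℓ.1 i j), fun i j => ?_,
    fun i j hij => (norm_entry_inv_mul_mul_le hd hlow i j).trans_lt (hℓ.2.2 i j hij)⟩
  rw [show (d⁻¹ * ℓ * d)⁻¹ = d⁻¹ * ℓ⁻¹ * d by group]
  exact (norm_entry_inv_mul_mul_le hd (Matrix.GeneralLinearGroup.isLowerTriangular_coe_inv hlow) i j).trans (hℓ.2.1 i j)

end Iwahori

theorem double_coset_dominant_subset (d : GL (Fin n) ℚ_[p])
    (hd : d ∈ Tplus p n) (x : GL (Fin n) ℚ_[p]) (hx : x ∈ dcos p n d) :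
    ∃ u : GL (Fin n) ℚ_[p], u ∈ Nset p n ∧ (∀ i j : Fin n, ‖entry p n u i j‖ ≤ 1) ∧
      ∃ j ∈ Jset p n, x = u * d * j := by
  obtain ⟨a, ha, b, hb, rfl⟩ := hx
  obtain ⟨u, ⟨hu, hu_int⟩, ℓ, hℓ, rfl, hlow⟩ := exists_NOset_mul_isLowerTriangular ha
  exact ⟨u, hu, hu_int, d⁻¹ * ℓ * d * b, mul_mem_Jset (inv_mul_mul_mem_Jset hd hℓ hlow) hb,
    by group⟩
end

section
/- (Existence and uniqueness of the Steinberg Iwahori-spherical Whittaker function) There exists a unique function W : G → ℂ such that for all u ∈ N, d ∈ T, σ ∈ S_n and j ∈ J: W(u·d·w_σ·j) = ψ(u)·(χδ_B)(d)·(-p)^{-ℓ(σ)} whenever λ(d) is σ-dominant, and W(u·d·w_σ·j) = 0 whenever λ(d) is not σ-dominant. (In particular, this formula is well defined: it is independent of the chosen Bruhat–Iwahori factorization g = u·d·w_σ·j.) -/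
open Matrix MeasureTheory Pointwise

variable (p n : ℕ) [Fact p.Prime]

/-!
Existence: Gaussian elimination from the bottom row up, by `N` on the left and `J` on the right.
In each row the pivot is the leftmost entry of largest norm, so the column operations clearing
that row have integral coefficients, of norm `< 1` left of the pivot: they lie in `J`.

Uniqueness of the value: if `u d w_σ j = u' d' w_τ j'`, then `C = (u'd')⁻¹(ud)` is upper
triangular and equals `w_τ k w_σ⁻¹` with `k ∈ J`. Its diagonal entries are units, which forces
`σ = τ` and `|d_i| = |d'_i|`. On the superdiagonal,
`u_{i,i+1} - u'_{i,i+1} = d'_i C_{i,i+1} / d_{i+1}`, which is integral because `λ(d)` is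
`σ`-dominant, so `ψ(u) = ψ(u')`.
-/

namespace SteinbergWhittaker

open Matrix

section Triangular

variable {m R : Type*} [Fintype m] [LinearOrder m] [CommRing R]

lemma diag_mul_of_blockTriangular {a c : Matrix m m R} (ha : a.BlockTriangular id)
    (hc : c.BlockTriangular id) (i : m) : (a * c) i i = a i i * c i i := by
  rw [mul_apply, Finset.sum_eq_single i]
  · intro k _ hk
    rcases hk.lt_or_gt with hki | hik
    · rw [ha hki, zero_mul]
    · rw [hc hik, mul_zero]
  · simp

lemma superdiag_mul_of_blockTriangular {a c : Matrix m m R} (ha : a.BlockTriangular id)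
    (hc : c.BlockTriangular id) {i j : m} (hij : i ⋖ j) :
    (a * c) i j = a i i * c i j + a i j * c j j := by
  rw [mul_apply, Finset.sum_eq_add i j hij.lt.ne]
  · intro k _ ⟨hki, hkj⟩
    rcases hki.lt_or_gt with hki | hik
    · rw [ha hki, zero_mul]
    · rw [hc (lt_of_le_of_ne (not_lt.1 (hij.2 hik)) (Ne.symm hkj)), mul_zero]
  · simp
  · simp

variable [DecidableEq m]

variable (R) in
def upperTriangular : Subgroup (GL m R) where
  carrier := {g | (g : Matrix m m R).BlockTriangular id}
  one_mem' := blockTriangular_one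
  mul_mem' ha hb := ha.mul hb
  inv_mem' {g} hg := by
    have := g.invertible
    simpa only [Set.mem_ofPred_eq, coe_units_inv] using blockTriangular_inv_of_blockTriangular hg

lemma inv_diag_mul_diag {g : GL m R} (hg : g ∈ upperTriangular R) (i : m) :
    (g⁻¹ : GL m R) i i * g i i = 1 := by
  rw [← diag_mul_of_blockTriangular (inv_mem hg) hg, ← Units.val_mul, inv_mul_cancel]
  simp

variable (R) in
def unitriangular : Subgroup (GL m R) where
  carrier := {g | (∀ i, g i i = 1) ∧ (g : Matrix m m R).BlockTriangular id}
  one_mem' := ⟨fun i => one_apply_eq i, blockTriangular_one⟩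
  mul_mem' {a b} ha hb :=
    ⟨fun i => by simp [diag_mul_of_blockTriangular ha.2 hb.2, ha.1, hb.1], ha.2.mul hb.2⟩
  inv_mem' {g} hg := by
    have hg' : g ∈ upperTriangular R := hg.2
    exact ⟨fun i => by simpa [hg.1 i] using inv_diag_mul_diag hg' i, inv_mem hg'⟩

lemma unitriangular_le_upperTriangular : unitriangular R ≤ upperTriangular (m := m) R :=
  fun _ hg => hg.2

lemma norm_diag_eq_one {𝕜 : Type*} [NormedField 𝕜] {C : GL m 𝕜} (hC : C ∈ upperTriangular 𝕜)
    (h : ∀ i j, ‖C i j‖ ≤ 1) (h' : ∀ i j, ‖(C⁻¹ : GL m 𝕜) i j‖ ≤ 1) (i : m) : ‖C i i‖ = 1 := by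
  have hprod := congrArg norm (inv_diag_mul_diag hC i)
  rw [norm_mul, norm_one] at hprod
  nlinarith [h i i, h' i i, norm_nonneg (C i i), norm_nonneg ((C⁻¹ : GL m 𝕜) i i)]

end Triangular

section RowColumnOperations

variable {m R : Type*} [Fintype m] [DecidableEq m] [CommRing R]

lemma exists_apply_ne_zero [Nontrivial R] (g : GL m R) (i : m) : ∃ c, g i c ≠ 0 := by
  by_contra! h
  exact GeneralLinearGroup.det_ne_zero g (det_eq_zero_of_row_eq_zero i h)

lemma exists_map_eq_of_forall_mem_range {m R S : Type*} [Fintype m] [DecidableEq m]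
    [CommRing R] [CommRing S] {f : R →+* S} (hf : Function.Injective f) (g : GL m S)
    (hg : ∀ i j, g i j ∈ f.range) (hg' : ∀ i j, (g⁻¹ : GL m S) i j ∈ f.range) :
    ∃ k : GL m R, GeneralLinearGroup.map f k = g := by
  choose A hA using hg
  choose B hB using hg'
  have hmap : ∀ M : Matrix m m R, M.map f = 1 → M = 1 := fun M hM => map_injective hf <| by
    simp only [hM, Matrix.map_one f (map_zero f) (map_one f)]
  have hA' : (of A).map f = g := by ext i j; simp [hA]
  have hB' : (of B).map f = (g⁻¹ : GL m S) := by ext i j; simp [hB]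
  have hAB : of A * of B = 1 := hmap _ <| by
    rw [Matrix.map_mul, hA', hB', ← Units.val_mul, mul_inv_cancel, Units.val_one]
  have hBA : of B * of A = 1 := hmap _ <| by
    rw [Matrix.map_mul, hA', hB', ← Units.val_mul, inv_mul_cancel, Units.val_one]
  exact ⟨⟨of A, of B, hAB, hBA⟩, Units.ext hA'⟩

def oneAddUnit {A : Type*} [Ring A] (q : A) (hq : q * q = 0) : Aˣ where
  val := 1 + q
  inv := 1 - q
  val_inv := by rw [add_mul, one_mul, mul_sub, mul_one, hq, sub_zero, sub_add_cancel]
  inv_val := by rw [sub_mul, one_mul, mul_add, mul_one, hq, add_zero, add_sub_cancel_right]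

lemma updateRow_zero_mul_self {c : m} {w : m → R} (hw : w c = 0) :
    updateRow (0 : Matrix m m R) c w * updateRow 0 c w = 0 := by
  ext a b
  simp [mul_apply, updateRow_apply, hw]

lemma updateCol_zero_mul_self {r : m} {v : m → R} (hv : v r = 0) :
    updateCol (0 : Matrix m m R) r v * updateCol 0 r v = 0 := by
  ext a b
  simp [mul_apply, updateCol_apply, hv]

lemma mul_oneAddUnit_updateRow_apply (g : GL m R) {c : m} {w : m → R} (hw : w c = 0) (a b : m) :
    (g * oneAddUnit _ (updateRow_zero_mul_self hw) : GL m R) a b = g a b + g a c * w b := by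
  change ((g : Matrix m m R) * (1 + updateRow 0 c w)) a b = _
  rw [Matrix.mul_add, Matrix.mul_one, Matrix.add_apply]
  simp [mul_apply, updateRow_apply]

lemma oneAddUnit_updateCol_mul_apply (g : GL m R) {r : m} {v : m → R} (hv : v r = 0) (a b : m) :
    (oneAddUnit _ (updateCol_zero_mul_self hv) * g : GL m R) a b = g a b + v a * g r b := by
  change ((1 + updateCol 0 r v) * (g : Matrix m m R)) a b = _
  rw [Matrix.add_mul, Matrix.one_mul, Matrix.add_apply]
  simp [mul_apply, updateCol_apply]

lemma exists_mem_unitriangular_clear_col {K : Type*} [LinearOrder m] [Field K] (g : GL m K)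
    {r c : m} (hc : g r c ≠ 0) :
    ∃ u ∈ unitriangular K, (∀ a < r, (u * g : GL m K) a c = 0) ∧
      ∀ a b, (r ≤ a ∨ g r b = 0) → (u * g : GL m K) a b = g a b := by
  set v : m → K := fun a => if a < r then -(g a c / g r c) else 0
  have hv : v r = 0 := by simp [v]
  refine ⟨oneAddUnit _ (updateCol_zero_mul_self hv), ⟨fun i => ?_, fun i j (hji : j < i) => ?_⟩,
    fun a ha => ?_, fun a b hab => ?_⟩
  · change (1 + updateCol 0 r v) i i = 1
    by_cases hi : i = r <;> simp [hi, hv]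
  · change (1 + updateCol 0 r v) i j = 0
    rw [Matrix.add_apply, one_apply_ne hji.ne', zero_add, updateCol_apply]
    split_ifs with hj
    · simp [v, not_lt_of_gt (hj ▸ hji)]
    · rfl
  · rw [oneAddUnit_updateCol_mul_apply _ hv]
    simp only [v, if_pos ha]
    field_simp
    ring
  · rw [oneAddUnit_updateCol_mul_apply _ hv]
    rcases hab with hra | hrb
    · simp [v, not_lt_of_ge hra]
    · simp [hrb]

def IsPivotRow (g : GL m R) (i : m) : Prop :=
  ∃ c, (∀ b ≠ c, g i b = 0) ∧ ∀ a ≠ i, g a c = 0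

end RowColumnOperations

lemma norm_one_add_apply_le_one {m 𝕜 : Type*} [DecidableEq m] [NormedRing 𝕜] [NormOneClass 𝕜]
    [IsUltrametricDist 𝕜] {M : Matrix m m 𝕜} (hM : ∀ a b, ‖M a b‖ ≤ 1) (a b : m) :
    ‖(1 + M) a b‖ ≤ 1 :=
  (IsUltrametricDist.norm_add_le_max _ _).trans
    (max_le (by rw [one_apply]; split_ifs <;> simp) (hM a b))

lemma exists_leftmost_max {ι α : Type*} [Fintype ι] [Nonempty ι] [LinearOrder ι] [LinearOrder α]
    (f : ι → α) : ∃ c, (∀ b, f b ≤ f c) ∧ ∀ b < c, f b < f c := by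
  obtain ⟨c₀, -, hc₀⟩ := Finset.univ.exists_max_image f Finset.univ_nonempty
  set S := Finset.univ.filter fun c => f c = f c₀
  have hS : S.Nonempty := ⟨c₀, by simp [S]⟩
  have hmin : f (S.min' hS) = f c₀ := (Finset.mem_filter.1 (S.min'_mem hS)).2
  refine ⟨S.min' hS, fun b => hmin ▸ hc₀ b (Finset.mem_univ b), fun b hb => ?_⟩
  refine lt_of_le_of_ne (hmin ▸ hc₀ b (Finset.mem_univ b)) fun hfb => ?_
  exact (S.min'_le b (by simp [S, hfb, hmin])).not_gt hb

lemma perm_eq_of_forall_le {n : ℕ} {σ τ : Equiv.Perm (Fin n)} (h : ∀ i, σ i ≤ τ i) : σ = τ := by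
  have hsum : ∑ i, (σ i : ℕ) = ∑ i, (τ i : ℕ) := by
    rw [Equiv.sum_comp σ (fun i : Fin n => (i : ℕ)), Equiv.sum_comp τ (fun i : Fin n => (i : ℕ))]
  ext i
  exact (Finset.sum_eq_sum_iff_of_le fun i _ => Fin.val_le_of_le (h i)).1 hsum i
    (Finset.mem_univ i)

section Padic

variable {p : ℕ} [Fact p.Prime]

lemma toZMod_eq_zero_iff_norm_lt_one (x : ℤ_[p]) : PadicInt.toZMod x = 0 ↔ ‖x‖ < 1 := by
  rw [← RingHom.mem_ker, PadicInt.ker_toZMod, IsLocalRing.mem_maximalIdeal,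
    PadicInt.mem_nonunits]

lemma valuation_eq_of_norm_eq {x y : ℚ_[p]} (hx : x ≠ 0) (hy : y ≠ 0) (h : ‖x‖ = ‖y‖) :
    x.valuation = y.valuation := by
  rw [Padic.norm_eq_zpow_neg_valuation hx, Padic.norm_eq_zpow_neg_valuation hy] at h
  have hp : (1 : ℝ) < p := by exact_mod_cast (Fact.out : p.Prime).one_lt
  exact neg_injective (zpow_right_injective₀ (by positivity) hp.ne' h)

lemma norm_mul_le_of_valuation_sub {a b c : ℚ_[p]} (ha : a ≠ 0) (hb : b ≠ 0) (k : ℤ)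
    (hab : -k ≤ a.valuation - b.valuation) (hc : ‖c‖ ≤ (p : ℝ) ^ (-k)) : ‖a‖ * ‖c‖ ≤ ‖b‖ := by
  have hp : (1 : ℝ) ≤ p := by exact_mod_cast (Fact.out : p.Prime).one_le
  have hp0 : (p : ℝ) ≠ 0 := by positivity
  have ha' : ‖a‖ ≤ (p : ℝ) ^ k * ‖b‖ := by
    rw [Padic.norm_eq_zpow_neg_valuation ha, Padic.norm_eq_zpow_neg_valuation hb,
      ← zpow_add₀ hp0]
    exact zpow_le_zpow_right₀ hp (by omega)
  calc ‖a‖ * ‖c‖ ≤ (p : ℝ) ^ k * ‖b‖ * (p : ℝ) ^ (-k) := by gcongr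
    _ = ‖b‖ := by rw [mul_right_comm, ← zpow_add₀ hp0, add_neg_cancel, zpow_zero, one_mul]

end Padic

section GLn

variable {p n : ℕ} [Fact p.Prime]

local notation "G" => GL (Fin n) ℚ_[p]

variable (p n) in
/-- `J` through reduction mod `p`, which makes it a subgroup for free: inverses of matrices that
are upper triangular mod `p` stay so. -/
noncomputable def iwahori : Subgroup (G) :=
  ((upperTriangular (ZMod p)).comap (GeneralLinearGroup.map PadicInt.toZMod)).map
    (GeneralLinearGroup.map PadicInt.Coe.ringHom)

lemma mem_iwahori_iff {g : G} : g ∈ iwahori p n ↔ g ∈ Jset p n := by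
  constructor
  · rintro ⟨k, hk, rfl⟩
    refine ⟨fun i j => PadicInt.norm_le_one (k i j), fun i j => ?_, fun i j hji => ?_⟩
    · rw [entry, ← map_inv]
      exact PadicInt.norm_le_one _
    · exact (toZMod_eq_zero_iff_norm_lt_one _).1 (hk hji)
  · rintro ⟨h, hinv, hlow⟩
    obtain ⟨k, rfl⟩ := exists_map_eq_of_forall_mem_range (f := PadicInt.Coe.ringHom)
      Subtype.coe_injective g (fun i j => ⟨⟨_, h i j⟩, rfl⟩) (fun i j => ⟨⟨_, hinv i j⟩, rfl⟩)
    exact ⟨k, fun i j hji => (toZMod_eq_zero_iff_norm_lt_one _).2 (hlow i j hji), rfl⟩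

lemma mem_unitriangular_iff {g : G} : g ∈ unitriangular ℚ_[p] ↔ g ∈ Nset p n := Iff.rfl

lemma coe_permGL (σ : Equiv.Perm (Fin n)) :
    (permGL p n σ : Matrix (Fin n) (Fin n) ℚ_[p]) = σ⁻¹.permMatrix ℚ_[p] :=
  transpose_permMatrix σ

lemma mul_permGL_apply (a : G) (σ : Equiv.Perm (Fin n)) (i j : Fin n) :
    (a * permGL p n σ : G) i j = a i (σ j) := by
  rw [Units.val_mul, coe_permGL, PEquiv.mul_toMatrix_toPEquiv]
  rfl

lemma permGL_mul_apply (a : G) (σ : Equiv.Perm (Fin n)) (i j : Fin n) :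
    (permGL p n σ * a : G) i j = a (σ⁻¹ i) j := by
  rw [Units.val_mul, coe_permGL, PEquiv.toMatrix_toPEquiv_mul]
  rfl

lemma permGL_inv (σ : Equiv.Perm (Fin n)) : (permGL p n σ)⁻¹ = permGL p n σ⁻¹ := by
  refine inv_eq_of_mul_eq_one_right (GeneralLinearGroup.ext fun i j => ?_)
  rw [permGL_mul_apply, coe_permGL, inv_inv, Units.val_one, one_apply]
  simp [PEquiv.toMatrix_apply, Equiv.toPEquiv_apply]

lemma mem_upperTriangular_of_mem_Tset {d : G} (hd : d ∈ Tset p n) : d ∈ upperTriangular ℚ_[p] :=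
  fun _ _ hji => hd _ _ hji.ne'

lemma mul_apply_of_mem_Tset {d : G} (hd : d ∈ Tset p n) (u : G) (i j : Fin n) :
    (u * d : G) i j = u i j * d j j := by
  rw [Units.val_mul, mul_apply, Finset.sum_eq_single j
    (fun k _ hk => by rw [show d k j = 0 from hd k j hk, mul_zero]) (by simp)]

lemma diag_ne_zero_of_mem_Tset {d : G} (hd : d ∈ Tset p n) (i : Fin n) : d i i ≠ 0 := by
  obtain ⟨c, hc⟩ := exists_apply_ne_zero d i
  obtain rfl : i = c := by_contra fun h => hc (hd i c h)
  exact hc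

lemma exists_mem_iwahori_clear_row (g : G) {r c : Fin n} (hc : g r c ≠ 0)
    (hmax : ∀ b, ‖(g r b : ℚ_[p])‖ ≤ ‖(g r c : ℚ_[p])‖)
    (hlt : ∀ b < c, ‖(g r b : ℚ_[p])‖ < ‖(g r c : ℚ_[p])‖) :
    ∃ j ∈ iwahori p n, (∀ b ≠ c, (g * j : G) r b = 0) ∧
      ∀ a b, (g a c = 0 ∨ g r b = 0) → (g * j : G) a b = g a b := by
  set w : Fin n → ℚ_[p] := fun b => if b = c then 0 else -(g r b / g r c)
  have hw : w c = 0 := by simp [w]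
  have hc' : 0 < ‖(g r c : ℚ_[p])‖ := norm_pos_iff.2 hc
  have hw1 : ∀ b, ‖w b‖ ≤ 1 := fun b => by
    by_cases hb : b = c
    · simp [w, hb]
    · simpa [w, hb, div_le_one hc'] using hmax b
  have hq : ∀ a b, ‖updateRow (0 : Matrix (Fin n) (Fin n) ℚ_[p]) c w a b‖ ≤ 1 := fun a b => by
    rw [updateRow_apply]; split_ifs <;> simp [hw1]
  refine ⟨oneAddUnit _ (updateRow_zero_mul_self hw), mem_iwahori_iff.2 ⟨?_, ?_, ?_⟩, ?_, ?_⟩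
  · exact norm_one_add_apply_le_one hq
  · change ∀ a b, ‖(1 - updateRow 0 c w) a b‖ ≤ 1
    simpa only [sub_eq_add_neg] using norm_one_add_apply_le_one (fun a b => by simpa using hq a b)
  · intro a b hba
    change ‖(1 + updateRow 0 c w) a b‖ < 1
    rw [Matrix.add_apply, one_apply_ne hba.ne', zero_add, updateRow_apply]
    split_ifs with ha
    · simpa [w, (ha ▸ hba).ne, div_lt_one hc'] using hlt b (ha ▸ hba)
    · simp
  · intro b hb
    rw [mul_oneAddUnit_updateRow_apply _ hw]
    simp only [w, if_neg hb]
    field_simp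
    ring
  · intro a b hab
    rw [mul_oneAddUnit_updateRow_apply _ hw]
    rcases hab with hac | hrb
    · simp [hac]
    · simp [w, hrb]

lemma exists_isPivotRow_of_le (g : G) (r : Fin n) (hg : ∀ i, r < i → IsPivotRow g i) :
    ∃ u ∈ unitriangular ℚ_[p], ∃ j ∈ iwahori p n,
      ∀ i, r ≤ i → IsPivotRow (u * g * j) i := by
  have : Nonempty (Fin n) := ⟨r⟩
  obtain ⟨c, hmax, hlt⟩ := exists_leftmost_max fun b => ‖(g r b : ℚ_[p])‖
  have hc : g r c ≠ 0 := by
    obtain ⟨b, hb⟩ := exists_apply_ne_zero g r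
    exact norm_pos_iff.1 ((norm_pos_iff.2 hb).trans_le (hmax b))
  obtain ⟨j, hj, hrow, hgj⟩ := exists_mem_iwahori_clear_row g hc hmax hlt
  have hc' : (g * j : G) r c ≠ 0 := by
    obtain ⟨c', hc'⟩ := exists_apply_ne_zero (g * j) r
    obtain rfl : c' = c := by_contra fun h => hc' (hrow c' h)
    exact hc'
  obtain ⟨u, hu, hcol, hugj⟩ := exists_mem_unitriangular_clear_col (g * j) hc'
  refine ⟨u, hu, j, hj, fun i hi => ?_⟩
  rw [mul_assoc]
  rcases hi.lt_or_eq with hi | rfl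
  · obtain ⟨ci, hrowi, hcoli⟩ := hg i hi
    have hrci : g r ci = 0 := hcoli r hi.ne
    have hic : g i c = 0 := hrowi c fun h => hc (h ▸ hrci)
    refine ⟨ci, fun b hb => ?_, fun a ha => ?_⟩
    · rw [hugj i b (Or.inl hi.le), hgj i b (Or.inl hic)]
      exact hrowi b hb
    · rw [hugj a ci (Or.inr (by rw [hgj r ci (Or.inr hrci)]; exact hrci)),
        hgj a ci (Or.inr hrci)]
      exact hcoli a ha
  · refine ⟨c, fun b hb => ?_, fun a ha => ?_⟩
    · rw [hugj _ b (Or.inl le_rfl)]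
      exact hrow b hb
    · rcases ha.lt_or_gt with ha | ha
      · exact hcol a ha
      · obtain ⟨ca, hrowa, hcola⟩ := hg a ha
        have hac : g a c = 0 := hrowa c fun h => hc (h ▸ hcola _ ha.ne)
        rw [hugj a c (Or.inl ha.le), hgj a c (Or.inl hac)]
        exact hac

lemma exists_forall_isPivotRow (k : ℕ) (g : G)
    (hg : ∀ i : Fin n, k ≤ i → IsPivotRow g i) :
    ∃ u ∈ unitriangular ℚ_[p], ∃ j ∈ iwahori p n,
      ∀ i, IsPivotRow (u * g * j) i := by
  induction k generalizing g with
  | zero => exact ⟨1, one_mem _, 1, one_mem _, by simpa using fun i => hg i (Nat.zero_le _)⟩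
  | succ k ih =>
    by_cases hk : k < n
    · obtain ⟨u, hu, j, hj, h⟩ := exists_isPivotRow_of_le g ⟨k, hk⟩ fun i hi => hg i hi
      obtain ⟨u', hu', j', hj', h'⟩ := ih (u * g * j) fun i hi => h i hi
      exact ⟨u' * u, mul_mem hu' hu, j * j', mul_mem hj hj', by simpa only [mul_assoc] using h'⟩
    · exact ih g fun i hi => hg i (by omega)

lemma exists_mem_Tset_eq_mul_permGL {g : G} (hg : ∀ i, IsPivotRow g i) :
    ∃ d ∈ Tset p n, ∃ σ, g = d * permGL p n σ := by
  choose ρ hrow hcol using hg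
  have hρ : Function.Injective ρ := fun i i' hii' => by_contra fun hne => by
    obtain ⟨b, hb⟩ := exists_apply_ne_zero g i'
    obtain rfl : b = ρ i' := by_contra fun h => hb (hrow i' b h)
    exact hb (hii' ▸ hcol i i' (Ne.symm hne))
  set σ := (Equiv.ofBijective ρ hρ.bijective_of_finite).symm
  refine ⟨g * (permGL p n σ)⁻¹, fun a b hab => ?_, σ, by group⟩
  rw [permGL_inv, entry, mul_permGL_apply]
  exact hcol b a hab

theorem exists_bruhat_iwahori_decomposition (g : G) :
    ∃ u ∈ unitriangular ℚ_[p], ∃ d ∈ Tset p n, ∃ σ, ∃ j ∈ iwahori p n,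
      g = u * d * permGL p n σ * j := by
  obtain ⟨u, hu, j, hj, h⟩ := exists_forall_isPivotRow n g fun i hi => absurd i.isLt hi.not_gt
  obtain ⟨d, hd, σ, hdσ⟩ := exists_mem_Tset_eq_mul_permGL h
  exact ⟨u⁻¹, inv_mem hu, d, hd, σ, j⁻¹, inv_mem hj, by rw [mul_assoc u⁻¹, ← hdσ]; group⟩

lemma apply_eq_of_mul_permGL_eq {C k : G} {σ τ : Equiv.Perm (Fin n)}
    (h : C * permGL p n σ = permGL p n τ * k) (i l : Fin n) : C i l = k (τ⁻¹ i) (σ⁻¹ l) := by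
  have := congrArg (fun g : G => g i (σ⁻¹ l)) h
  simpa only [mul_permGL_apply, permGL_mul_apply, Equiv.Perm.coe_inv, Equiv.apply_symm_apply]
    using this

/-- An upper triangular `C` with `C w_σ ∈ w_τ J` forces `σ = τ`: its diagonal entries are units,
and an entry of `J` strictly below the diagonal is not. -/
lemma perm_eq_and_norm_diag_of_mul_permGL_eq {C k : G} {σ τ : Equiv.Perm (Fin n)}
    (hC : C ∈ upperTriangular ℚ_[p]) (hk : k ∈ iwahori p n)
    (h : C * permGL p n σ = permGL p n τ * k) : σ = τ ∧ ∀ i, ‖C i i‖ = 1 := by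
  have hJ := mem_iwahori_iff.1 hk
  have hJinv := mem_iwahori_iff.1 (inv_mem hk)
  have h' : C⁻¹ * permGL p n τ = permGL p n σ * k⁻¹ := by
    rw [inv_mul_eq_iff_eq_mul, ← mul_assoc, h, mul_inv_cancel_right]
  have hdiag : ∀ i, ‖C i i‖ = 1 := norm_diag_eq_one hC
    (fun i l => by rw [apply_eq_of_mul_permGL_eq h]; exact hJ.1 _ _)
    (fun i l => by rw [apply_eq_of_mul_permGL_eq h']; exact hJinv.1 _ _)
  refine ⟨(perm_eq_of_forall_le fun i => ?_).symm |> inv_injective, hdiag⟩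
  by_contra! hlt
  have := hJ.2.2 _ _ hlt
  rw [entry, ← apply_eq_of_mul_permGL_eq h, hdiag] at this
  exact this.false

lemma psiN_eq_of_norm_sub_le_one {ψ₀ : ℚ_[p] → ℂ} (hψadd : ∀ x y, ψ₀ (x + y) = ψ₀ x * ψ₀ y)
    (hψtriv : ∀ x : ℚ_[p], ‖x‖ ≤ 1 → ψ₀ x = 1) {u u' : G}
    (h : ∀ (i : Fin n) (hi : (i : ℕ) + 1 < n),
      ‖entry p n u i (finSucc n i hi) - entry p n u' i (finSucc n i hi)‖ ≤ 1) :
    psiN p n ψ₀ u = psiN p n ψ₀ u' := by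
  refine Finset.prod_congr rfl fun i _ => ?_
  split_ifs with hi
  · rw [← sub_add_cancel (entry p n u i _) (entry p n u' i _), hψadd, hψtriv _ (h i hi), one_mul]
  · rfl

lemma isDom_congr {σ : Equiv.Perm (Fin n)} {d d' : G}
    (h : ∀ i, (entry p n d i i).valuation = (entry p n d' i i).valuation) :
    IsDom p n σ d ↔ IsDom p n σ d' := by
  simp only [IsDom, h]

lemma chiDelta_congr (z : Fin n → ℂˣ) {d d' : G}
    (h : ∀ i, (entry p n d i i).valuation = (entry p n d' i i).valuation) :
    chiDelta p n z d = chiDelta p n z d' := by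
  simp only [chiDelta, h]

lemma diag_eq_of_mul_eq {u u' d d' C : G} (hu : u ∈ unitriangular ℚ_[p])
    (hu' : u' ∈ unitriangular ℚ_[p]) (hd : d ∈ Tset p n) (hd' : d' ∈ Tset p n)
    (hC : C ∈ upperTriangular ℚ_[p]) (hb : u * d = u' * d' * C) (i : Fin n) :
    (d i i : ℚ_[p]) = d' i i * C i i := by
  have hb' : u' * d' ∈ upperTriangular ℚ_[p] :=
    mul_mem (unitriangular_le_upperTriangular hu') (mem_upperTriangular_of_mem_Tset hd')
  have := congrArg (fun g : G => g i i) hb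
  simp only [Units.val_mul (u' * d'), diag_mul_of_blockTriangular hb' hC,
    mul_apply_of_mem_Tset hd, mul_apply_of_mem_Tset hd', hu.1, hu'.1, one_mul] at this
  exact this

lemma superdiag_eq_of_mul_eq {u u' d d' C : G} (hu : u ∈ unitriangular ℚ_[p])
    (hu' : u' ∈ unitriangular ℚ_[p]) (hd : d ∈ Tset p n) (hd' : d' ∈ Tset p n)
    (hC : C ∈ upperTriangular ℚ_[p]) (hb : u * d = u' * d' * C) {i j : Fin n} (hij : i ⋖ j) :
    ((u i j : ℚ_[p]) - u' i j) * d j j = d' i i * C i j := by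
  have hb' : u' * d' ∈ upperTriangular ℚ_[p] :=
    mul_mem (unitriangular_le_upperTriangular hu') (mem_upperTriangular_of_mem_Tset hd')
  have := congrArg (fun g : G => g i j) hb
  simp only [Units.val_mul (u' * d'), superdiag_mul_of_blockTriangular hb' hC hij,
    mul_apply_of_mem_Tset hd, mul_apply_of_mem_Tset hd', hu'.1, one_mul] at this
  linear_combination this - u' i j * diag_eq_of_mul_eq hu hu' hd hd' hC hb j

/-- Where `σ⁻¹` inverts the pair `i, i + 1`, the entry of `C` comes from below the diagonal of
`k ∈ J`, so it gains a factor `p` that pays for the weaker dominance inequality. -/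
lemma psiN_eq_of_isDom {ψ₀ : ℚ_[p] → ℂ} (hψadd : ∀ x y, ψ₀ (x + y) = ψ₀ x * ψ₀ y)
    (hψtriv : ∀ x : ℚ_[p], ‖x‖ ≤ 1 → ψ₀ x = 1) {u u' d d' C k : G} {σ : Equiv.Perm (Fin n)}
    (hu : u ∈ unitriangular ℚ_[p]) (hu' : u' ∈ unitriangular ℚ_[p])
    (hd : d ∈ Tset p n) (hd' : d' ∈ Tset p n) (hC : C ∈ upperTriangular ℚ_[p])
    (hb : u * d = u' * d' * C) (hCdiag : ∀ i, ‖C i i‖ = 1) (hk : k ∈ Jset p n)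
    (hCk : ∀ i l, C i l = k (σ⁻¹ i) (σ⁻¹ l)) (hdom : IsDom p n σ d) :
    psiN p n ψ₀ u = psiN p n ψ₀ u' := by
  refine psiN_eq_of_norm_sub_le_one hψadd hψtriv fun i hi => ?_
  set j := finSucc n i hi
  have hij : i ⋖ j := Fin.covBy_iff.2 (Nat.covBy_iff_add_one_eq.2 rfl)
  have hdi : ‖(d' i i : ℚ_[p])‖ = ‖(d i i : ℚ_[p])‖ := by
    rw [diag_eq_of_mul_eq hu hu' hd hd' hC hb i, norm_mul, hCdiag, mul_one]
  have hbound : ‖(d i i : ℚ_[p])‖ * ‖(C i j : ℚ_[p])‖ ≤ ‖(d j j : ℚ_[p])‖ := by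
    have hdi0 := diag_ne_zero_of_mem_Tset hd i
    have hdj0 := diag_ne_zero_of_mem_Tset hd j
    rcases lt_or_gt_of_ne (σ⁻¹.injective.ne (finSucc_ne n i hi)) with hlt | hgt
    · refine norm_mul_le_of_valuation_sub hdi0 hdj0 0 (by rw [neg_zero]; exact (hdom i hi).1 hlt) ?_
      rw [hCk, neg_zero, zpow_zero]
      exact hk.1 _ _
    · refine norm_mul_le_of_valuation_sub hdi0 hdj0 1 ((hdom i hi).2 hgt) ?_
      rw [hCk, ← zero_sub, ← Padic.norm_lt_pow_iff_norm_le_pow_sub_one, zpow_zero]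
      exact hk.2.2 _ _ hgt
  have hmul : ‖entry p n u i j - entry p n u' i j‖ * ‖(d j j : ℚ_[p])‖ ≤ 1 * ‖(d j j : ℚ_[p])‖ := by
    rw [← norm_mul, entry, entry, superdiag_eq_of_mul_eq hu hu' hd hd' hC hb hij, norm_mul, hdi,
      one_mul]
    exact hbound
  exact le_of_mul_le_mul_right hmul (norm_pos_iff.2 (diag_ne_zero_of_mem_Tset hd j))

open Classical in
noncomputable def whittakerValue (ψ₀ : ℚ_[p] → ℂ) (z : Fin n → ℂˣ) (u d : G)
    (σ : Equiv.Perm (Fin n)) : ℂ :=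
  if IsDom p n σ d then psiN p n ψ₀ u * chiDelta p n z d * (-(p : ℂ)) ^ (-(len n σ : ℤ)) else 0

lemma eq_whittakerValue_iff {ψ₀ : ℚ_[p] → ℂ} {z : Fin n → ℂˣ} {u d : G} {σ : Equiv.Perm (Fin n)}
    {w : ℂ} : w = whittakerValue ψ₀ z u d σ ↔
      (IsDom p n σ d → w = psiN p n ψ₀ u * chiDelta p n z d * (-(p : ℂ)) ^ (-(len n σ : ℤ))) ∧
      (¬ IsDom p n σ d → w = 0) := by
  unfold whittakerValue
  split_ifs with h <;> simp [h]

theorem whittakerValue_eq_of_mul_eq {ψ₀ : ℚ_[p] → ℂ} (hψadd : ∀ x y, ψ₀ (x + y) = ψ₀ x * ψ₀ y)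
    (hψtriv : ∀ x : ℚ_[p], ‖x‖ ≤ 1 → ψ₀ x = 1) (z : Fin n → ℂˣ) {u u' d d' j j' : G}
    {σ τ : Equiv.Perm (Fin n)} (hu : u ∈ unitriangular ℚ_[p]) (hu' : u' ∈ unitriangular ℚ_[p])
    (hd : d ∈ Tset p n) (hd' : d' ∈ Tset p n) (hj : j ∈ iwahori p n) (hj' : j' ∈ iwahori p n)
    (h : u * d * permGL p n σ * j = u' * d' * permGL p n τ * j') :
    whittakerValue ψ₀ z u d σ = whittakerValue ψ₀ z u' d' τ := by
  set C := (u' * d')⁻¹ * (u * d)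
  have hC : C ∈ upperTriangular ℚ_[p] :=
    mul_mem (inv_mem (mul_mem (unitriangular_le_upperTriangular hu')
      (mem_upperTriangular_of_mem_Tset hd')))
      (mul_mem (unitriangular_le_upperTriangular hu) (mem_upperTriangular_of_mem_Tset hd))
  have hk : j' * j⁻¹ ∈ iwahori p n := mul_mem hj' (inv_mem hj)
  have hCk : C * permGL p n σ = permGL p n τ * (j' * j⁻¹) := by
    simp only [C, mul_assoc, inv_mul_eq_iff_eq_mul]
    simp only [← mul_assoc, ← h]
    group
  obtain ⟨rfl, hCdiag⟩ := perm_eq_and_norm_diag_of_mul_permGL_eq hC hk hCk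
  have hb : u * d = u' * d' * C := (mul_inv_cancel_left _ _).symm
  have hval : ∀ i, (entry p n d i i).valuation = (entry p n d' i i).valuation := fun i =>
    valuation_eq_of_norm_eq (diag_ne_zero_of_mem_Tset hd i) (diag_ne_zero_of_mem_Tset hd' i) <| by
      rw [entry, entry, diag_eq_of_mul_eq hu hu' hd hd' hC hb i, norm_mul, hCdiag, mul_one]
  by_cases hdom : IsDom p n σ d
  · rw [whittakerValue, whittakerValue, if_pos hdom, if_pos ((isDom_congr hval).1 hdom),
      chiDelta_congr z hval, psiN_eq_of_isDom hψadd hψtriv hu hu' hd hd' hC hb hCdiag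
        (mem_iwahori_iff.1 hk) (apply_eq_of_mul_permGL_eq hCk) hdom]
  · rw [whittakerValue, whittakerValue, if_neg hdom, if_neg (mt (isDom_congr hval).2 hdom)]

end GLn

end SteinbergWhittaker

theorem steinberg_whittaker_exists_unique
    (ψ₀ : ℚ_[p] → ℂ)
    (hψadd : ∀ x y : ℚ_[p], ψ₀ (x + y) = ψ₀ x * ψ₀ y)
    (hψtriv : ∀ x : ℚ_[p], ‖x‖ ≤ 1 → ψ₀ x = 1)
    (z : Fin n → ℂˣ)
    : ∃! W : GL (Fin n) ℚ_[p] → ℂ,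
      ∀ u ∈ Nset p n, ∀ d ∈ Tset p n, ∀ σ : Equiv.Perm (Fin n), ∀ j ∈ Jset p n,
        (IsDom p n σ d →
          W (u * d * permGL p n σ * j)
            = psiN p n ψ₀ u * chiDelta p n z d * (-(p : ℂ)) ^ (-(len n σ : ℤ))) ∧
        (¬ IsDom p n σ d → W (u * d * permGL p n σ * j) = 0) := by
  open SteinbergWhittaker in
  simp only [← eq_whittakerValue_iff]
  choose u hu d hd σ j hj hg using exists_bruhat_iwahori_decomposition (p := p) (n := n)
  refine ⟨fun g => whittakerValue ψ₀ z (u g) (d g) (σ g), fun u' hu' d' hd' σ' j' hj' => ?_,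
    fun W hW => funext fun g => ?_⟩
  · exact whittakerValue_eq_of_mul_eq hψadd hψtriv z (hu _) (mem_unitriangular_iff.2 hu') (hd _)
      hd' (hj _) (mem_iwahori_iff.2 hj') (hg _).symm
  · exact (congrArg W (hg g)).trans
      (hW _ (hu g) _ (hd g) _ _ (mem_iwahori_iff.1 (hj g)))
end

section
/- (No fixed vectors for larger parahorics) Let W : G → ℂ be the function determined by: W(u·d·w_σ·j) = ψ(u)·(χδ_B)(d)·(-p)^{-ℓ(σ)} whenever λ(d) is σ-dominant, and W(u·d·w_σ·j) = 0 otherwise, for all u ∈ N, d ∈ T, σ ∈ S_n, j ∈ J. Then for every 1 ≤ i < n there exists g ∈ G with W(g·w_{s_i}) ≠ W(g); in fact W(d_{s_i}·w_{s_i}) ≠ W(d_{s_i}) = 0. Consequently W is not right-invariant under any parahoric subgroup strictly containing J. -/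
open Matrix MeasureTheory Pointwise

variable (p n : ℕ) [Fact p.Prime]

section AuxLemmas

variable (p n : ℕ) [Fact p.Prime]

lemma val_p_zpow (m : ℤ) : ((p : ℚ_[p]) ^ m).valuation = m := by
  have hp1 : (1 : ℝ) < p := by exact_mod_cast (Fact.out : p.Prime).one_lt
  have hp0 : (0 : ℝ) < p := lt_trans one_pos hp1
  have hpne : (p : ℚ_[p]) ≠ 0 := Nat.cast_ne_zero.mpr (Fact.out : p.Prime).ne_zero
  have hx : (p : ℚ_[p]) ^ m ≠ 0 := zpow_ne_zero m hpne
  have h1 : ‖(p : ℚ_[p]) ^ m‖ = (p : ℝ) ^ (-(((p : ℚ_[p]) ^ m).valuation)) :=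
    Padic.norm_eq_zpow_neg_valuation hx
  have h2 : ‖(p : ℚ_[p]) ^ m‖ = (p : ℝ) ^ (-m) := by
    rw [norm_zpow, Padic.norm_p, _root_.inv_zpow, ← _root_.zpow_neg]
  rw [h2] at h1
  have := (zpow_right_inj₀ hp0 (ne_of_gt hp1)).mp h1.symm
  omega

lemma entry_one (a b : Fin n) : entry p n 1 a b = if a = b then 1 else 0 := by
  simp [entry, Matrix.one_apply]

lemma one_mem_N : (1 : GL (Fin n) ℚ_[p]) ∈ Nset p n := by
  constructor
  · intro k; simp [entry_one]
  · intro a b hba; rw [entry_one, if_neg (ne_of_gt hba)]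

lemma one_mem_J : (1 : GL (Fin n) ℚ_[p]) ∈ Jset p n := by
  refine ⟨?_, ?_, ?_⟩
  · intro a b; rw [entry_one]; split <;> simp
  · intro a b; rw [inv_one, entry_one]; split <;> simp
  · intro a b hba; rw [entry_one, if_neg (ne_of_gt hba)]; simp

lemma permGL_one : permGL p n 1 = 1 := by
  apply Units.ext
  show ((Equiv.refl (Fin n)).toPEquiv.toMatrix : Matrix (Fin n) (Fin n) ℚ_[p])ᵀ
    = (1 : Matrix (Fin n) (Fin n) ℚ_[p])
  rw [Equiv.toPEquiv_refl, PEquiv.toMatrix_refl, Matrix.transpose_one]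

end AuxLemmas


/-- No fixed vectors for larger parahorics: if `W` is the Steinberg Iwahori-spherical
Whittaker function, then for every simple reflection `s_i` there is `g` with
`W(g·w_{s_i}) ≠ W(g)`; in fact `W(d_{s_i}·w_{s_i}) ≠ W(d_{s_i}) = 0`, where `d_{s_i}`
is the `s_i`-dominant element `diag(p^{μ_1},…,p^{μ_n})` with `μ_n = 0`,
`μ_i = μ_{i+1} - 1` if `s_i⁻¹(i) > s_i⁻¹(i+1)` and `μ_i = μ_{i+1}` otherwise.
Consequently `W` is not right-invariant under any parahoric strictly containing `J`. -/
theorem whittaker_not_parahoric_invariant (hn : 2 ≤ n)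
    (ψ₀ : ℚ_[p] → ℂ)
    (hψadd : ∀ x y : ℚ_[p], ψ₀ (x + y) = ψ₀ x * ψ₀ y)
    (hψtriv : ∀ x : ℚ_[p], ‖x‖ ≤ 1 → ψ₀ x = 1)
    (hψnontriv : ∃ x : ℚ_[p], ‖x‖ ≤ (p : ℝ) ∧ ψ₀ x ≠ 1)
    (z : Fin n → ℂˣ) (hz : ∏ i : Fin n, z i = 1)
    (W : GL (Fin n) ℚ_[p] → ℂ)
    (hW : ∀ u ∈ Nset p n, ∀ d ∈ Tset p n, ∀ σ : Equiv.Perm (Fin n), ∀ j ∈ Jset p n,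
      (IsDom p n σ d →
        W (u * d * permGL p n σ * j)
          = psiN p n ψ₀ u * chiDelta p n z d * (-(p : ℂ)) ^ (-(len n σ : ℤ))) ∧
      (¬ IsDom p n σ d → W (u * d * permGL p n σ * j) = 0))
    (i : Fin n) (h : (i : ℕ) + 1 < n)
    (m : Fin n → ℤ) (hmlast : m ⟨n - 1, by omega⟩ = 0)
    (hmrec : ∀ (k : Fin n) (hk : (k : ℕ) + 1 < n),
      m k = m (finSucc n k hk)
        - if (Equiv.swap i (finSucc n i h))⁻¹ (finSucc n k hk)
              < (Equiv.swap i (finSucc n i h))⁻¹ k then 1 else 0)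
    (d : GL (Fin n) ℚ_[p]) (hdT : d ∈ Tset p n)
    (hdent : ∀ k : Fin n, entry p n d k k = (p : ℚ_[p]) ^ (m k)) :
    (∃ g : GL (Fin n) ℚ_[p],
        W (g * permGL p n (Equiv.swap i (finSucc n i h))) ≠ W g) ∧
    W (d * permGL p n (Equiv.swap i (finSucc n i h))) ≠ W d ∧
    W d = 0 := by
  classical
  set σ : Equiv.Perm (Fin n) := Equiv.swap i (finSucc n i h) with hσ
  set j : Fin n := finSucc n i h with hj
  have hij : i ≠ j := finSucc_ne n i h
  have hiltj : i < j := by simp [hj, finSucc, Fin.lt_def]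
  -- valuations of d
  have vk : ∀ k : Fin n, (entry p n d k k).valuation = m k := by
    intro k; rw [hdent k]; exact val_p_zpow p (m k)
  -- m differences
  have hdiff : ∀ (k : Fin n) (hk : (k : ℕ) + 1 < n),
      m k = m (finSucc n k hk) - if σ⁻¹ (finSucc n k hk) < σ⁻¹ k then 1 else 0 :=
    hmrec
  -- d is σ-dominant
  have hdom : IsDom p n σ d := by
    intro k hk
    rw [vk, vk]
    constructor
    · intro hlt
      have : ¬ σ⁻¹ (finSucc n k hk) < σ⁻¹ k := asymm hlt
      rw [hdiff k hk, if_neg this]; omega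
    · intro hlt
      rw [hdiff k hk, if_pos hlt]; omega
  -- d is not 1-dominant
  have hnotdom : ¬ IsDom p n (1 : Equiv.Perm (Fin n)) d := by
    intro hd
    have h1 := (hd i h).1
    have hcond : (1 : Equiv.Perm (Fin n))⁻¹ i < (1 : Equiv.Perm (Fin n))⁻¹ (finSucc n i h) := by
      simpa using hiltj
    have h2 := h1 hcond
    rw [vk, vk] at h2
    have h3 := hdiff i h
    have hsw : σ⁻¹ (finSucc n i h) < σ⁻¹ i := by
      rw [hσ, Equiv.swap_inv]
      rw [show Equiv.swap i (finSucc n i h) (finSucc n i h) = i from Equiv.swap_apply_right _ _,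
        Equiv.swap_apply_left]
      exact hiltj
    rw [if_pos hsw] at h3
    omega
  -- W d = 0
  have hWd : W d = 0 := by
    have := ((hW 1 (one_mem_N p n) d hdT 1 1 (one_mem_J p n)).2 hnotdom)
    rwa [permGL_one, one_mul, mul_one, mul_one] at this
  -- psiN of 1 is 1
  have hpsi : psiN p n ψ₀ 1 = 1 := by
    rw [psiN]
    apply Finset.prod_eq_one
    intro k _
    by_cases hk : (k : ℕ) + 1 < n
    · rw [dif_pos hk, entry_one, if_neg (finSucc_ne n k hk)]
      exact hψtriv 0 (by simp)
    · rw [dif_neg hk]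
  -- chiDelta is nonzero
  have hpC : (p : ℂ) ≠ 0 := Nat.cast_ne_zero.mpr (Fact.out : p.Prime).ne_zero
  have hchi : chiDelta p n z d ≠ 0 := by
    rw [chiDelta]
    apply Finset.prod_ne_zero_iff.mpr
    intro k _
    exact mul_ne_zero (zpow_ne_zero _ (z k).ne_zero) (zpow_ne_zero _ hpC)
  -- W (d * permGL σ) ≠ 0
  have hWdσ : W (d * permGL p n σ) ≠ 0 := by
    have := ((hW 1 (one_mem_N p n) d hdT σ 1 (one_mem_J p n)).1 hdom)
    rw [one_mul, mul_one, hpsi, one_mul] at this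
    rw [this]
    exact mul_ne_zero hchi (zpow_ne_zero _ (neg_ne_zero.mpr hpC))
  have hne : W (d * permGL p n σ) ≠ W d := by rw [hWd]; exact hWdσ
  exact ⟨⟨d, hne⟩, hne, hWd⟩
end
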